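/- arXiv:1710.07278 — 8 statements merged into one kernel-verified Lean document; each statement's English description precedes it below -/
import Mathlib

section
/- Let μ, μ̄ ∈ R^D with μ_i = μ̄_i for all i ≤ i_0, where 1 ≤ i_0 ≤ D−1. Then for any stopping time τ with respect to the frequency filtration, R(μ̄,τ)² ≥ B²_{i_0}(μ̄) · (1 − R(μ,τ)² / V_{i_0+1}), where R(ν,τ)² = E_ν[‖μ̂^(τ) − ν‖²]. -/
open MeasureTheory ProbabilityTheory Real Finset

/-- The risk `R(ν,τ)² = E_ν[‖μ̂^(τ) − ν‖²]` of the truncated SVD estimator with a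
data-dependent truncation rule `τ`, in the Gaussian sequence model
`Y_i = λ_i ν_i + δ ε_i`, `i = 1, …, D` (data outside `{1,…,D}` is set to `0`). -/
noncomputable def svdRisk {Ω : Type*} [MeasurableSpace Ω] (P : Measure Ω) (D : ℕ)
    (lam : ℕ → ℝ) (δ : ℝ) (ε : ℕ → Ω → ℝ) (τ : (ℕ → ℝ) → ℕ) (ν : ℕ → ℝ) : ℝ :=
  ∫ ω, ∑ i ∈ Finset.Icc 1 D,
    ((if i ≤ τ (fun j => if 1 ≤ j ∧ j ≤ D then lam j * ν j + δ * ε j ω else 0)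
        then (lam i)⁻¹ * (lam i * ν i + δ * ε i ω) else 0) - ν i) ^ 2 ∂P

/-! With `N = τ(Y)`, the risk of the truncated SVD estimator is exactly
`∑ᵢ (δ/λᵢ)² P(i ≤ N) + νᵢ² P(N < i)`: the event `{i ≤ N}` is decided by `ε₁, …, ε_{i-1}`,
hence is independent of `εᵢ`, and `E εᵢ² = 1`.
Since `μ` and `μ̄` give the same data `Y₁, …, Y_{i₀}` for every noise realisation, the event
`{N ≤ i₀}` is the same for both; call its probability `p`. Dropping every coordinate past `i₀`
on it gives `R(μ̄,τ)² ≥ B²_{i₀}(μ̄) p`, and keeping the first `i₀ + 1` coordinates off it gives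
`R(μ,τ)² ≥ V_{i₀+1} (1 - p)`. Eliminating `p` yields the bound. -/

lemma integral_sq_eq_one_of_map_eq_gaussianReal {Ω : Type*} [MeasurableSpace Ω]
    {P : Measure Ω} {X : Ω → ℝ} (hX : AEMeasurable X P) (hX_law : P.map X = gaussianReal 0 1) :
    ∫ ω, X ω ^ 2 ∂P = 1 := by
  have h : ∫ x, x ^ 2 ∂gaussianReal 0 1 = 1 := by
    rw [← variance_of_integral_eq_zero aemeasurable_id' integral_id_gaussianReal]
    exact variance_fun_id_gaussianReal
  rwa [← hX_law, integral_map hX (by fun_prop)] at h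

lemma integral_indicator_comp_eq_measureReal_mul {Ω ι : Type*} [MeasurableSpace Ω]
    {P : Measure Ω} [IsProbabilityMeasure P] {ε : ι → Ω → ℝ} (hεmeas : ∀ i, Measurable (ε i))
    (hε : iIndepFun ε P) {S : Set ι} {i : ι} (hi : i ∉ S) {s : Set Ω}
    (hs : MeasurableSet[⨆ j ∈ S, MeasurableSpace.comap (ε j) inferInstance] s)
    {g : ℝ → ℝ} (hg : Measurable g) :
    ∫ ω, s.indicator (fun ω => g (ε i ω)) ω ∂P = P.real s * ∫ ω, g (ε i ω) ∂P := by
  have hindep : Indep (⨆ j ∈ S, MeasurableSpace.comap (ε j) inferInstance)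
      (⨆ j ∈ ({i} : Set ι), MeasurableSpace.comap (ε j) inferInstance) P :=
    indep_iSup_of_disjoint (fun j => (hεmeas j).comap_le) hε.iIndep
      (Set.disjoint_singleton_right.2 hi)
  have hfun : IndepFun (s.indicator fun _ => (1 : ℝ)) (fun ω => g (ε i ω)) P := by
    rw [IndepFun_iff_Indep]
    refine indep_of_indep_of_le_right (indep_of_indep_of_le_left hindep ?_) ?_
    · exact (measurable_const.indicator hs).comap_le
    · exact ((hg.comp (comap_measurable (ε i))).mono
        (le_biSup (fun j => MeasurableSpace.comap (ε j) inferInstance)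
          (Set.mem_singleton i)) le_rfl).comap_le
  have hs' : MeasurableSet s := (iSup₂_le fun j _ => (hεmeas j).comap_le) s hs
  calc ∫ ω, s.indicator (fun ω => g (ε i ω)) ω ∂P
      = ∫ ω, s.indicator (fun _ => (1 : ℝ)) ω * g (ε i ω) ∂P := by
        congr 1; ext ω; by_cases hω : ω ∈ s <;> simp [hω]
    _ = P.real s * ∫ ω, g (ε i ω) ∂P := by
        rw [hfun.integral_fun_mul_eq_mul_integral
          (measurable_const.indicator hs').aestronglyMeasurable
          (hg.comp (hεmeas i)).aestronglyMeasurable, integral_indicator_const _ hs',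
          smul_eq_mul, mul_one]

lemma mul_one_sub_div_le_of_mul_le {B V p R R' : ℝ} (hB : 0 ≤ B) (hV : 0 < V)
    (hR' : B * p ≤ R') (hR : V * (1 - p) ≤ R) : B * (1 - R / V) ≤ R' := by
  have hp : 1 - R / V ≤ p := by
    rw [sub_le_comm, le_div_iff₀ hV]
    linarith
  exact (mul_le_mul_of_nonneg_left hp hB).trans hR'

lemma setOf_lt_eq_setOf_le_pred {α : Type*} (N : α → ℕ) {i : ℕ} (hi : 0 < i) :
    {x | N x < i} = {x | N x ≤ i - 1} :=
  Set.ext fun _ => Nat.lt_iff_le_pred hi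

section TruncationRisk

variable {Ω : Type*} [MeasurableSpace Ω]

/-- Expected cost of truncating at the random level `N` when keeping coordinate `i` costs `a i`
and dropping it costs `b i`. -/
noncomputable def truncationRisk (P : Measure Ω) (D : ℕ) (a b : ℕ → ℝ) (N : Ω → ℕ) : ℝ :=
  ∑ i ∈ Icc 1 D, (a i * P.real {ω | i ≤ N ω} + b i * P.real {ω | N ω < i})

variable {P : Measure Ω} {a b : ℕ → ℝ}

lemma truncationRisk_term_nonneg (ha : ∀ i, 0 ≤ a i) (hb : ∀ i, 0 ≤ b i) (N : Ω → ℕ) (i : ℕ) :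
    0 ≤ a i * P.real {ω | i ≤ N ω} + b i * P.real {ω | N ω < i} :=
  add_nonneg (mul_nonneg (ha i) measureReal_nonneg) (mul_nonneg (hb i) measureReal_nonneg)

lemma tail_mul_measureReal_le_truncationRisk [IsFiniteMeasure P] (ha : ∀ i, 0 ≤ a i)
    (hb : ∀ i, 0 ≤ b i) (N : Ω → ℕ) (D m : ℕ) :
    (∑ i ∈ Icc (m + 1) D, b i) * P.real {ω | N ω ≤ m} ≤ truncationRisk P D a b N := by
  rw [sum_mul, truncationRisk]
  refine (sum_le_sum fun i hi => ?_).trans <| sum_le_sum_of_subset_of_nonneg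
    (Icc_subset_Icc (by omega) le_rfl) fun i _ _ => truncationRisk_term_nonneg ha hb N i
  have hsub : {ω | N ω ≤ m} ⊆ {ω | N ω < i} := fun ω (hω : N ω ≤ m) =>
    show N ω < i by have := (mem_Icc.1 hi).1; omega
  have := mul_nonneg (ha i) (measureReal_nonneg (μ := P) (s := {ω | i ≤ N ω}))
  nlinarith [mul_le_mul_of_nonneg_left (measureReal_mono hsub (μ := P)) (hb i)]

lemma head_mul_measureReal_le_truncationRisk [IsFiniteMeasure P] (ha : ∀ i, 0 ≤ a i)
    (hb : ∀ i, 0 ≤ b i) (N : Ω → ℕ) {D m : ℕ} (hm : m ≤ D) :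
    (∑ i ∈ Icc 1 m, a i) * P.real {ω | m ≤ N ω} ≤ truncationRisk P D a b N := by
  rw [sum_mul, truncationRisk]
  refine (sum_le_sum fun i hi => ?_).trans <| sum_le_sum_of_subset_of_nonneg
    (Icc_subset_Icc le_rfl hm) fun i _ _ => truncationRisk_term_nonneg ha hb N i
  have hsub : {ω | m ≤ N ω} ⊆ {ω | i ≤ N ω} := fun ω (hω : m ≤ N ω) =>
    show i ≤ N ω by have := (mem_Icc.1 hi).2; omega
  have := mul_nonneg (hb i) (measureReal_nonneg (μ := P) (s := {ω | N ω < i}))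
  nlinarith [mul_le_mul_of_nonneg_left (measureReal_mono hsub (μ := P)) (ha i)]

end TruncationRisk

def IsFreqStoppingTime (τ : (ℕ → ℝ) → ℕ) : Prop :=
  ∀ n : ℕ, MeasurableSet[MeasurableSpace.comap
    (fun (y : ℕ → ℝ) (i : ℕ) => if 1 ≤ i ∧ i ≤ n then y i else 0) inferInstance]
    {y : ℕ → ℝ | τ y ≤ n}

lemma IsFreqStoppingTime.le_iff_of_eqOn {τ : (ℕ → ℝ) → ℕ} (hτ : IsFreqStoppingTime τ)
    {n : ℕ} {y y' : ℕ → ℝ} (h : ∀ i, 1 ≤ i → i ≤ n → y i = y' i) : τ y ≤ n ↔ τ y' ≤ n := by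
  obtain ⟨S, -, hS⟩ := hτ n
  have htrunc : (fun i => if 1 ≤ i ∧ i ≤ n then y i else 0)
      = fun i => if 1 ≤ i ∧ i ≤ n then y' i else 0 := by
    ext i; split_ifs with hi
    · exact h i hi.1 hi.2
    · rfl
  change y ∈ {y | τ y ≤ n} ↔ y' ∈ {y | τ y ≤ n}
  rw [← hS]
  simp only [Set.mem_preimage, htrunc]

section SVD

variable {Ω : Type*} (D : ℕ) (lam : ℕ → ℝ) (δ : ℝ) (ε : ℕ → Ω → ℝ) (τ : (ℕ → ℝ) → ℕ)
  (ν : ℕ → ℝ)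

def svdData (ω : Ω) : ℕ → ℝ :=
  fun j => if 1 ≤ j ∧ j ≤ D then lam j * ν j + δ * ε j ω else 0

noncomputable def svdCoordLoss (i : ℕ) (ω : Ω) : ℝ :=
  {ω | i ≤ τ (svdData D lam δ ε ν ω)}.indicator (fun ω => (δ / lam i) ^ 2 * ε i ω ^ 2) ω
    + {ω | τ (svdData D lam δ ε ν ω) < i}.indicator (fun _ => ν i ^ 2) ω

lemma sq_error_eq_svdCoordLoss {i : ℕ} (hi : lam i ≠ 0) (ω : Ω) :
    ((if i ≤ τ (svdData D lam δ ε ν ω) then (lam i)⁻¹ * (lam i * ν i + δ * ε i ω) else 0)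
      - ν i) ^ 2 = svdCoordLoss D lam δ ε τ ν i ω := by
  by_cases h : i ≤ τ (svdData D lam δ ε ν ω)
  · simp only [h, ↓reduceIte, svdCoordLoss, Set.indicator, Set.mem_ofPred_eq, not_lt.2 h,
      add_zero]
    field_simp
    ring
  · simp [svdCoordLoss, Set.indicator, h, not_le.1 h]

variable {D lam δ ε τ} [MeasurableSpace Ω]

lemma IsFreqStoppingTime.measurableSet_svdData_le (hτ : IsFreqStoppingTime τ) {n : ℕ}
    (hε : ∀ j ≤ n, Measurable (ε j)) :
    MeasurableSet {ω | τ (svdData D lam δ ε ν ω) ≤ n} := by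
  obtain ⟨S, hS, hSτ⟩ := hτ n
  rw [show {ω | τ (svdData D lam δ ε ν ω) ≤ n} = svdData D lam δ ε ν ⁻¹' {y | τ y ≤ n} from rfl,
    ← hSτ, ← Set.preimage_comp]
  refine (measurable_pi_lambda _ fun j => ?_) hS
  by_cases hj : 1 ≤ j ∧ j ≤ n
  · simp only [Function.comp_apply, hj, and_self, if_true, svdData]
    split_ifs
    · exact ((hε j hj.2).const_mul δ).const_add _
    · exact measurable_const
  · simp only [Function.comp_apply, hj, if_false]
    exact measurable_const

variable {P : Measure Ω}

lemma integrable_svdCoordLoss [IsFiniteMeasure P] (hτ : IsFreqStoppingTime τ)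
    (hεmeas : ∀ i, Measurable (ε i)) (hεsq : ∀ i, ∫ ω, ε i ω ^ 2 ∂P = 1) {i : ℕ} (hi : 1 ≤ i) :
    Integrable (svdCoordLoss D lam δ ε τ ν i) P := by
  have hdrop : MeasurableSet {ω | τ (svdData D lam δ ε ν ω) < i} := by
    rw [setOf_lt_eq_setOf_le_pred _ hi]
    exact hτ.measurableSet_svdData_le ν fun j _ => hεmeas j
  have hkeep : {ω | i ≤ τ (svdData D lam δ ε ν ω)} = {ω | τ (svdData D lam δ ε ν ω) < i}ᶜ := by
    ext ω; simp
  have hεint : Integrable (fun ω => ε i ω ^ 2) P :=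
    .of_integral_ne_zero (by rw [hεsq]; exact one_ne_zero)
  refine Integrable.add ?_ ((integrable_const _).indicator hdrop)
  rw [hkeep]
  exact (hεint.const_mul _).indicator hdrop.compl

lemma integral_svdCoordLoss [IsProbabilityMeasure P] (hτ : IsFreqStoppingTime τ)
    (hεmeas : ∀ i, Measurable (ε i)) (hεindep : iIndepFun ε P)
    (hεsq : ∀ i, ∫ ω, ε i ω ^ 2 ∂P = 1) {i : ℕ} (hi : 1 ≤ i) :
    ∫ ω, svdCoordLoss D lam δ ε τ ν i ω ∂P
      = (δ / lam i) ^ 2 * P.real {ω | i ≤ τ (svdData D lam δ ε ν ω)}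
        + ν i ^ 2 * P.real {ω | τ (svdData D lam δ ε ν ω) < i} := by
  have hdrop_past :
      MeasurableSet[⨆ j ∈ Set.Iic (i - 1), MeasurableSpace.comap (ε j) inferInstance]
        {ω | τ (svdData D lam δ ε ν ω) < i} := by
    rw [setOf_lt_eq_setOf_le_pred _ hi]
    exact @IsFreqStoppingTime.measurableSet_svdData_le _ D lam δ ε τ ν
      (⨆ j ∈ Set.Iic (i - 1), MeasurableSpace.comap (ε j) inferInstance) hτ (i - 1)
      fun j hj => (comap_measurable (ε j)).mono
        (le_biSup (fun j => MeasurableSpace.comap (ε j) inferInstance) hj) le_rfl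
  have hdrop : MeasurableSet {ω | τ (svdData D lam δ ε ν ω) < i} :=
    (iSup₂_le fun j _ => (hεmeas j).comap_le) _ hdrop_past
  have hkeep : {ω | i ≤ τ (svdData D lam δ ε ν ω)} = {ω | τ (svdData D lam δ ε ν ω) < i}ᶜ := by
    ext ω; simp
  have hεint : Integrable (fun ω => ε i ω ^ 2) P :=
    .of_integral_ne_zero (by rw [hεsq]; exact one_ne_zero)
  have hkeep_integral : ∫ ω, {ω | i ≤ τ (svdData D lam δ ε ν ω)}.indicator
      (fun ω => (δ / lam i) ^ 2 * ε i ω ^ 2) ω ∂P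
      = (δ / lam i) ^ 2 * P.real {ω | i ≤ τ (svdData D lam δ ε ν ω)} := by
    rw [hkeep, integral_indicator_comp_eq_measureReal_mul hεmeas hεindep
      (i := i) (S := Set.Iic (i - 1)) (by simp; omega) hdrop_past.compl
      (g := fun x => (δ / lam i) ^ 2 * x ^ 2) (by fun_prop),
      integral_const_mul, hεsq, mul_one, mul_comm]
  unfold svdCoordLoss
  rw [integral_add, hkeep_integral, integral_indicator_const _ hdrop, smul_eq_mul,
    mul_comm (P.real _)]
  · rw [hkeep]; exact (hεint.const_mul _).indicator hdrop.compl
  · exact (integrable_const _).indicator hdrop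

theorem svdRisk_eq_truncationRisk [IsProbabilityMeasure P] (hlam : ∀ i ∈ Icc 1 D, lam i ≠ 0)
    (hεmeas : ∀ i, Measurable (ε i)) (hεindep : iIndepFun ε P)
    (hεsq : ∀ i, ∫ ω, ε i ω ^ 2 ∂P = 1) (hτ : IsFreqStoppingTime τ) :
    svdRisk P D lam δ ε τ ν = truncationRisk P D (fun i => (δ / lam i) ^ 2) (fun i => ν i ^ 2)
      (fun ω => τ (svdData D lam δ ε ν ω)) := by
  have hloss : ∀ ω, ∑ i ∈ Icc 1 D,
      ((if i ≤ τ (svdData D lam δ ε ν ω) then (lam i)⁻¹ * (lam i * ν i + δ * ε i ω) else 0)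
        - ν i) ^ 2 = ∑ i ∈ Icc 1 D, svdCoordLoss D lam δ ε τ ν i ω := fun ω =>
    sum_congr rfl fun i hi => sq_error_eq_svdCoordLoss D lam δ ε τ ν (hlam i hi) ω
  refine (integral_congr_ae (.of_forall hloss)).trans ?_
  rw [integral_finsetSum _ fun i hi =>
    integrable_svdCoordLoss ν hτ hεmeas hεsq (mem_Icc.1 hi).1]
  exact sum_congr rfl fun i hi =>
    integral_svdCoordLoss ν hτ hεmeas hεindep hεsq (mem_Icc.1 hi).1

end SVD

theorem frequency_two_point_lower_bound_general
    {Ω : Type*} [MeasurableSpace Ω] (P : Measure Ω) [IsProbabilityMeasure P]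
    (D : ℕ) (lam μ μbar : ℕ → ℝ) (δ : ℝ) (hδ : 0 < δ)
    (hlam_pos : ∀ i, 1 ≤ i → i ≤ D → 0 < lam i)
    (ε : ℕ → Ω → ℝ) (hεmeas : ∀ i, Measurable (ε i))
    (hεindep : iIndepFun ε P)
    (hεgauss : ∀ i, Measure.map (ε i) P = gaussianReal 0 1)
    (τ : (ℕ → ℝ) → ℕ)
    (hstop : ∀ n : ℕ,
      MeasurableSet[MeasurableSpace.comap
        (fun (y : ℕ → ℝ) (i : ℕ) => if 1 ≤ i ∧ i ≤ n then y i else 0) inferInstance]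
        {y : ℕ → ℝ | τ y ≤ n})
    (i0 : ℕ) (hi0 : 1 ≤ i0) (hi0D : i0 ≤ D - 1)
    (hagree : ∀ i, 1 ≤ i → i ≤ i0 → μ i = μbar i) :
    svdRisk P D lam δ ε τ μbar
      ≥ (∑ i ∈ Finset.Icc (i0 + 1) D, (μbar i) ^ 2)
        * (1 - svdRisk P D lam δ ε τ μ
              / (δ ^ 2 * ∑ i ∈ Finset.Icc 1 (i0 + 1), ((lam i)⁻¹) ^ 2)) := by
  have hτ : IsFreqStoppingTime τ := hstop
  have hlam : ∀ i ∈ Icc 1 D, 0 < lam i := fun i hi => hlam_pos i (mem_Icc.1 hi).1 (mem_Icc.1 hi).2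
  have hεsq : ∀ i, ∫ ω, ε i ω ^ 2 ∂P = 1 := fun i =>
    integral_sq_eq_one_of_map_eq_gaussianReal (hεmeas i).aemeasurable (hεgauss i)
  have hrisk := fun ν => svdRisk_eq_truncationRisk (δ := δ) ν (fun i hi => (hlam i hi).ne')
    hεmeas hεindep hεsq hτ
  set p := P.real {ω | τ (svdData D lam δ ε μ ω) ≤ i0}
  have hp_bar : P.real {ω | τ (svdData D lam δ ε μbar ω) ≤ i0} = p := by
    congr 1; ext ω
    exact (hτ.le_iff_of_eqOn fun j hj1 hj2 => by simp only [svdData, hagree j hj1 hj2]).symm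
  have hp_compl : P.real {ω | i0 + 1 ≤ τ (svdData D lam δ ε μ ω)} = 1 - p := by
    rw [← probReal_compl_eq_one_sub (hτ.measurableSet_svdData_le μ fun j _ => hεmeas j)]
    congr 1; ext ω; simp
  set V := δ ^ 2 * ∑ i ∈ Icc 1 (i0 + 1), (lam i)⁻¹ ^ 2
  have hbias : (∑ i ∈ Icc (i0 + 1) D, μbar i ^ 2) * p ≤ svdRisk P D lam δ ε τ μbar := by
    rw [hrisk, ← hp_bar]
    exact tail_mul_measureReal_le_truncationRisk (fun _ => by positivity)
      (fun _ => by positivity) _ D i0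
  have hvar : V * (1 - p) ≤ svdRisk P D lam δ ε τ μ := by
    have hV_sum : V = ∑ i ∈ Icc 1 (i0 + 1), (δ / lam i) ^ 2 := by
      simp only [V, mul_sum, div_eq_mul_inv, mul_pow]
    rw [hrisk, ← hp_compl, hV_sum]
    exact head_mul_measureReal_le_truncationRisk (fun _ => by positivity)
      (fun _ => by positivity) _ (by omega)
  have hV : 0 < V := mul_pos (by positivity) <| sum_pos (fun i hi => by
    have := hlam i (Icc_subset_Icc le_rfl (by omega) hi); positivity) (nonempty_Icc.2 (by omega))
  exact mul_one_sub_div_le_of_mul_le (sum_nonneg fun i _ => sq_nonneg _) hV hbias hvar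

/-- two-point lower bound for stopping times of the frequency
filtration: if `μ_i = μ̄_i` for `i ≤ i₀` then
`R(μ̄,τ)² ≥ B²_{i₀}(μ̄) (1 − R(μ,τ)²/V_{i₀+1})`. -/
theorem frequency_two_point_lower_bound
    {Ω : Type*} [MeasurableSpace Ω] (P : Measure Ω) [IsProbabilityMeasure P]
    (D : ℕ) (lam μ μbar : ℕ → ℝ) (δ : ℝ) (hδ : 0 < δ)
    (hlam_pos : ∀ i, 1 ≤ i → i ≤ D → 0 < lam i)
    (hlam_mono : ∀ i j, 1 ≤ i → i ≤ j → j ≤ D → lam j ≤ lam i)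
    (ε : ℕ → Ω → ℝ) (hεmeas : ∀ i, Measurable (ε i))
    (hεindep : iIndepFun ε P)
    (hεgauss : ∀ i, Measure.map (ε i) P = gaussianReal 0 1)
    (τ : (ℕ → ℝ) → ℕ) (hτD : ∀ y, τ y ≤ D)
    (hstop : ∀ n : ℕ,
      MeasurableSet[MeasurableSpace.comap
        (fun (y : ℕ → ℝ) (i : ℕ) => if 1 ≤ i ∧ i ≤ n then y i else 0) inferInstance]
        {y : ℕ → ℝ | τ y ≤ n})
    (i0 : ℕ) (hi0 : 1 ≤ i0) (hi0D : i0 ≤ D - 1)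
    (hagree : ∀ i, 1 ≤ i → i ≤ i0 → μ i = μbar i) :
    svdRisk P D lam δ ε τ μbar
      ≥ (∑ i ∈ Finset.Icc (i0 + 1) D, (μbar i) ^ 2)
        * (1 - svdRisk P D lam δ ε τ μ
              / (δ ^ 2 * ∑ i ∈ Finset.Icc 1 (i0 + 1), ((lam i)⁻¹) ^ 2)) :=
  frequency_two_point_lower_bound_general P D lam μ μbar δ hδ hlam_pos ε hεmeas hεindep hεgauss τ
    hstop i0 hi0 hi0D hagree
end

section
/- Let τ = τ((Y_i)_{1≤i≤D}) ∈ {0,…,D} be any measurable data-dependent index in the Gaussian sequence model. Then for every m ∈ {1,…,D}, if V_m ≥ 200·R(μ,τ)², then P_μ(τ ≥ m) ≤ 0.9. -/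
open MeasureTheory ProbabilityTheory Real Finset

/-!
On the event `{τ ≥ m}` the estimator keeps the first `m` coordinates, so its loss is at least
the pure-noise term `∑_{i ≤ m} (δ / λ_i)² ε_i²`, whose mean is `V_m`. This term cannot hide its
mass on a small event: from `x² ≤ 1 + x⁴ / 4` and `E ε⁴ = 3` one gets `E[ε_i²; Aᶜ] ≤ P(Aᶜ) + 3/4`,
hence `E[ε_i²; A] ≥ P(A) - 3/4`. Therefore `R(μ,τ)² ≥ (P(τ ≥ m) - 3/4) V_m`, and `V_m ≥ 200 R(μ,τ)²`
forces `P(τ ≥ m) ≤ 3/4 + 1/200`.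
-/

open scoped Nat

section

variable {Ω : Type*} [MeasurableSpace Ω] {P : Measure Ω}

lemma integral_even_pow_mul_exp_neg_half_mul_sq (k : ℕ) :
    ∫ x : ℝ, x ^ (2 * k) * rexp (-2⁻¹ * x ^ 2) = (2 * k - 1 : ℕ)‼ * √(2 * π) := by
  have hIoi := integral_rpow_mul_exp_neg_mul_rpow (p := 2) (q := ((2 * k : ℕ) : ℝ))
    (b := 2⁻¹) two_pos (by linarith [(Nat.cast_nonneg (2 * k) : (0 : ℝ) ≤ _)]) (by norm_num)
  have hfold : ∫ x : ℝ, x ^ (2 * k) * rexp (-2⁻¹ * x ^ 2)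
      = 2 * ∫ x in Set.Ioi (0 : ℝ), x ^ ((2 * k : ℕ) : ℝ) * rexp (-2⁻¹ * x ^ (2 : ℝ)) := by
    have h := integral_comp_abs (f := fun x : ℝ => x ^ (2 * k) * rexp (-2⁻¹ * x ^ 2))
    simp only [pow_mul, sq_abs] at h
    simpa only [rpow_natCast, rpow_two, pow_mul] using h
  have hexp : (((2 * k : ℕ) : ℝ) + 1) / 2 = k + 1 / 2 := by push_cast; ring
  have hpow : (2 : ℝ)⁻¹ ^ (-((k : ℝ) + 1 / 2)) = 2 ^ k * √2 := by
    rw [inv_rpow zero_le_two, rpow_neg zero_le_two, inv_inv, rpow_add two_pos, rpow_natCast,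
      ← sqrt_eq_rpow]
  rw [hfold, hIoi, neg_div, hexp, hpow, Gamma_nat_add_half, sqrt_mul zero_le_two]
  field_simp

lemma integral_even_pow_gaussianReal (k : ℕ) :
    ∫ x, x ^ (2 * k) ∂gaussianReal 0 1 = (2 * k - 1 : ℕ)‼ := by
  have hdensity : ∀ x : ℝ, gaussianPDFReal 0 1 x • x ^ (2 * k)
      = (√(2 * π))⁻¹ * (x ^ (2 * k) * rexp (-2⁻¹ * x ^ 2)) := fun x => by
    simp only [gaussianPDFReal, smul_eq_mul, NNReal.coe_one, mul_one, sub_zero]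
    ring_nf
  have : √(2 * π) ≠ 0 := by positivity
  rw [integral_gaussianReal_eq_integral_smul one_ne_zero]
  simp_rw [hdensity]
  rw [integral_const_mul, integral_even_pow_mul_exp_neg_half_mul_sq]
  field_simp

lemma integrable_pow_gaussianReal (μ : ℝ) (v : NNReal) (n : ℕ) :
    Integrable (fun x => x ^ n) (gaussianReal μ v) :=
  (memLp_id_gaussianReal n).integrable_norm_pow'.mono' (by fun_prop)
    (ae_of_all _ fun x => (norm_pow x n).le)

lemma ProbabilityTheory.HasLaw.integrable_comp {𝓧 : Type*} [MeasurableSpace 𝓧] {μ : Measure 𝓧}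
    {X : Ω → 𝓧} (hX : HasLaw X μ P) {f : 𝓧 → ℝ} (hf : Integrable f μ) :
    Integrable (fun ω => f (X ω)) P :=
  (hX.map_eq ▸ hf).comp_aemeasurable hX.aemeasurable

lemma setIntegral_sq_le_measureReal_add_integral_pow_four [IsFiniteMeasure P] {f : Ω → ℝ}
    (hf : Integrable (fun ω => f ω ^ 4) P) (s : Set Ω) :
    ∫ ω in s, f ω ^ 2 ∂P ≤ P.real s + (∫ ω, f ω ^ 4 ∂P) / 4 := by
  have hdom : Integrable (fun ω => 1 + f ω ^ 4 / 4) P := (integrable_const 1).add (hf.div_const 4)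
  calc ∫ ω in s, f ω ^ 2 ∂P
      ≤ ∫ ω in s, (1 + f ω ^ 4 / 4) ∂P :=
        -- `x ^ 2 ≤ 1 + x ^ 4 / 4` is `(x ^ 2 - 2) ^ 2 ≥ 0`
        integral_mono_of_nonneg (ae_of_all _ fun ω => sq_nonneg _) hdom.integrableOn
          (ae_of_all _ fun ω => by nlinarith [sq_nonneg (f ω ^ 2 - 2)])
    _ = P.real s + (∫ ω in s, f ω ^ 4 ∂P) / 4 := by
        rw [integral_add (integrable_const 1).integrableOn (hf.div_const 4).integrableOn,
          setIntegral_const, integral_div, smul_eq_mul, mul_one]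
    _ ≤ P.real s + (∫ ω, f ω ^ 4 ∂P) / 4 := by
        have := setIntegral_le_integral (s := s) hf (ae_of_all _ fun ω => by positivity)
        linarith

lemma ProbabilityTheory.HasLaw.measureReal_sub_le_setIntegral_sq {ξ : Ω → ℝ}
    (hξ : HasLaw ξ (gaussianReal 0 1) P) {s : Set Ω} (hs : MeasurableSet s) :
    P.real s - 3 / 4 ≤ ∫ ω in s, ξ ω ^ 2 ∂P := by
  have := hξ.isProbabilityMeasure
  have hmoment (k : ℕ) : ∫ ω, ξ ω ^ (2 * k) ∂P = (2 * k - 1 : ℕ)‼ :=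
    (hξ.integral_comp (f := fun x => x ^ (2 * k)) (by fun_prop)).trans
      (integral_even_pow_gaussianReal k)
  have hsplit := integral_add_compl hs (hξ.integrable_comp (integrable_pow_gaussianReal 0 1 2))
  have hcompl := setIntegral_sq_le_measureReal_add_integral_pow_four
    (hξ.integrable_comp (integrable_pow_gaussianReal 0 1 4)) sᶜ
  rw [measureReal_compl hs, probReal_univ] at hcompl
  have h2 := hmoment 1
  have h4 := hmoment 2
  norm_num at h2 h4
  linarith

lemma measureReal_sub_mul_sum_le_setIntegral_sum_sq {ι : Type*} {ξ : ι → Ω → ℝ}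
    (hξ : ∀ i, HasLaw (ξ i) (gaussianReal 0 1) P) {t : Finset ι} {a : ι → ℝ}
    (ha : ∀ i ∈ t, 0 ≤ a i) {s : Set Ω} (hs : MeasurableSet s) :
    (P.real s - 3 / 4) * ∑ i ∈ t, a i ≤ ∫ ω in s, ∑ i ∈ t, a i * ξ i ω ^ 2 ∂P := by
  rw [integral_finsetSum _ fun i _ =>
    ((hξ i).integrable_comp (integrable_pow_gaussianReal 0 1 2)).integrableOn.const_mul (a i),
    mul_sum]
  refine sum_le_sum fun i hi => ?_
  rw [integral_const_mul, mul_comm]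
  exact mul_le_mul_of_nonneg_left ((hξ i).measureReal_sub_le_setIntegral_sq hs) (ha i hi)

def obsSeq (D : ℕ) (lam : ℕ → ℝ) (δ : ℝ) (ε : ℕ → Ω → ℝ) (ν : ℕ → ℝ) (ω : Ω) : ℕ → ℝ :=
  fun j => if 1 ≤ j ∧ j ≤ D then lam j * ν j + δ * ε j ω else 0

lemma measurable_obsSeq {D : ℕ} {lam : ℕ → ℝ} {δ : ℝ} {ε : ℕ → Ω → ℝ} (ν : ℕ → ℝ)
    (hε : ∀ i, Measurable (ε i)) : Measurable (obsSeq D lam δ ε ν) := by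
  refine measurable_pi_lambda _ fun j => ?_
  unfold obsSeq
  split_ifs
  · exact measurable_const.add ((hε j).const_mul δ)
  · exact measurable_const

lemma svdRisk_eq_integral {D : ℕ} {lam : ℕ → ℝ} (hlam : ∀ i ∈ Icc 1 D, lam i ≠ 0) (δ : ℝ)
    (ε : ℕ → Ω → ℝ) (τ : (ℕ → ℝ) → ℕ) (ν : ℕ → ℝ) :
    svdRisk P D lam δ ε τ ν = ∫ ω, ∑ i ∈ Icc 1 D,
      (if i ≤ τ (obsSeq D lam δ ε ν ω) then (δ / lam i) ^ 2 * ε i ω ^ 2 else ν i ^ 2) ∂P := by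
  unfold svdRisk
  refine integral_congr_ae (ae_of_all _ fun ω => sum_congr rfl fun i hi => ?_)
  rw [show (fun j => if 1 ≤ j ∧ j ≤ D then lam j * ν j + δ * ε j ω else 0)
    = obsSeq D lam δ ε ν ω from rfl]
  split_ifs
  · field_simp [hlam i hi]
    ring
  · ring

lemma setIntegral_noise_le_svdRisk [IsFiniteMeasure P] {D m : ℕ} (hmD : m ≤ D) {lam : ℕ → ℝ}
    (hlam : ∀ i ∈ Icc 1 D, lam i ≠ 0) (δ : ℝ) {ε : ℕ → Ω → ℝ} (hε : ∀ i, Measurable (ε i))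
    (hε2 : ∀ i, Integrable (fun ω => ε i ω ^ 2) P) {τ : (ℕ → ℝ) → ℕ} (hτ : Measurable τ)
    (ν : ℕ → ℝ) :
    ∫ ω in {ω | m ≤ τ (obsSeq D lam δ ε ν ω)}, ∑ i ∈ Icc 1 m, (δ / lam i) ^ 2 * ε i ω ^ 2 ∂P
      ≤ svdRisk P D lam δ ε τ ν := by
  set T := fun ω => τ (obsSeq D lam δ ε ν ω)
  have hT : Measurable T := hτ.comp (measurable_obsSeq ν hε)
  set ℓ := fun i ω => if i ≤ T ω then (δ / lam i) ^ 2 * ε i ω ^ 2 else ν i ^ 2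
  have hℓ_nonneg : ∀ i ω, 0 ≤ ℓ i ω := fun i ω => by
    simp only [ℓ]
    split_ifs <;> positivity
  have hℓ_int : ∀ i, Integrable (ℓ i) P := fun i =>
    Integrable.piecewise (s := {ω | i ≤ T ω}) (hT measurableSet_Ici)
      ((hε2 i).const_mul _).integrableOn (integrable_const _).integrableOn
  have hloss : ∀ ω ∈ {ω | m ≤ T ω},
      ∑ i ∈ Icc 1 m, (δ / lam i) ^ 2 * ε i ω ^ 2 ≤ ∑ i ∈ Icc 1 D, ℓ i ω := fun ω hω =>
    calc ∑ i ∈ Icc 1 m, (δ / lam i) ^ 2 * ε i ω ^ 2 = ∑ i ∈ Icc 1 m, ℓ i ω :=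
          sum_congr rfl fun i hi => (if_pos ((mem_Icc.mp hi).2.trans hω)).symm
      _ ≤ ∑ i ∈ Icc 1 D, ℓ i ω :=
          sum_le_sum_of_subset_of_nonneg (Icc_subset_Icc_right hmD) fun i _ _ => hℓ_nonneg i ω
  rw [svdRisk_eq_integral hlam]
  calc _ ≤ ∫ ω in {ω | m ≤ T ω}, ∑ i ∈ Icc 1 D, ℓ i ω ∂P :=
        setIntegral_mono_on
          (integrable_finsetSum _ fun i _ => (hε2 i).const_mul _).integrableOn
          (integrable_finsetSum _ fun i _ => hℓ_int i).integrableOn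
          (hT measurableSet_Ici) hloss
    _ ≤ ∫ ω, ∑ i ∈ Icc 1 D, ℓ i ω ∂P :=
        setIntegral_le_integral (integrable_finsetSum _ fun i _ => hℓ_int i)
          (ae_of_all _ fun ω => sum_nonneg fun i _ => hℓ_nonneg i ω)

end

theorem lower_stop_probability_general
    {Ω : Type*} [MeasurableSpace Ω] (P : Measure Ω) [IsProbabilityMeasure P]
    (D : ℕ) (lam μ : ℕ → ℝ) (δ : ℝ) (hδ : 0 < δ)
    (hlam_pos : ∀ i, 1 ≤ i → i ≤ D → 0 < lam i)
    (ε : ℕ → Ω → ℝ) (hεmeas : ∀ i, Measurable (ε i))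
    (hεgauss : ∀ i, Measure.map (ε i) P = gaussianReal 0 1)
    (τ : (ℕ → ℝ) → ℕ) (hτmeas : Measurable τ)
    (m : ℕ) (hm1 : 1 ≤ m) (hmD : m ≤ D)
    (hVm : δ ^ 2 * ∑ i ∈ Finset.Icc 1 m, ((lam i)⁻¹) ^ 2
        ≥ 200 * svdRisk P D lam δ ε τ μ) :
    (P {ω | m ≤ τ (fun j => if 1 ≤ j ∧ j ≤ D then lam j * μ j + δ * ε j ω else 0)}).toReal
      ≤ 0.9 := by
  have hε (i : ℕ) : HasLaw (ε i) (gaussianReal 0 1) P := ⟨(hεmeas i).aemeasurable, hεgauss i⟩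
  have hlam (i : ℕ) (hi : i ∈ Icc 1 D) : 0 < lam i :=
    hlam_pos i (mem_Icc.mp hi).1 (mem_Icc.mp hi).2
  set A := {ω | m ≤ τ (obsSeq D lam δ ε μ ω)}
  set V := ∑ i ∈ Icc 1 m, (δ / lam i) ^ 2
  have hA : MeasurableSet A := hτmeas.comp (measurable_obsSeq μ hεmeas) measurableSet_Ici
  have hV_pos : 0 < V := sum_pos (fun i hi => by
      have := hlam i (Icc_subset_Icc_right hmD hi)
      positivity) ⟨1, mem_Icc.mpr ⟨le_rfl, hm1⟩⟩
  have hV : δ ^ 2 * ∑ i ∈ Icc 1 m, ((lam i)⁻¹) ^ 2 = V := by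
    simp only [V, mul_sum, div_eq_mul_inv, mul_pow]
  have hrisk : (P.real A - 3 / 4) * V ≤ svdRisk P D lam δ ε τ μ :=
    (measureReal_sub_mul_sum_le_setIntegral_sum_sq hε (fun i _ => sq_nonneg _) hA).trans
      (setIntegral_noise_le_svdRisk hmD (fun i hi => (hlam i hi).ne') δ hεmeas
        (fun i => (hε i).integrable_comp (integrable_pow_gaussianReal 0 1 2)) hτmeas μ)
  have hPA : P.real A ≤ 3 / 4 + 1 / 200 := by nlinarith
  change P.real A ≤ 0.9
  linarith

/-- for an arbitrary measurable data-dependent index `τ` in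
`{0,…,D}`, for any `1 ≤ m ≤ D`, if `V_m ≥ 200·R(μ,τ)²` then
`P_μ(τ ≥ m) ≤ 0.9`. -/
theorem lower_stop_probability
    {Ω : Type*} [MeasurableSpace Ω] (P : Measure Ω) [IsProbabilityMeasure P]
    (D : ℕ) (lam μ : ℕ → ℝ) (δ : ℝ) (hδ : 0 < δ)
    (hlam_pos : ∀ i, 1 ≤ i → i ≤ D → 0 < lam i)
    (hlam_mono : ∀ i j, 1 ≤ i → i ≤ j → j ≤ D → lam j ≤ lam i)
    (ε : ℕ → Ω → ℝ) (hεmeas : ∀ i, Measurable (ε i))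
    (hεindep : iIndepFun ε P)
    (hεgauss : ∀ i, Measure.map (ε i) P = gaussianReal 0 1)
    (τ : (ℕ → ℝ) → ℕ) (hτmeas : Measurable τ) (hτD : ∀ y, τ y ≤ D)
    (m : ℕ) (hm1 : 1 ≤ m) (hmD : m ≤ D)
    (hVm : δ ^ 2 * ∑ i ∈ Finset.Icc 1 m, ((lam i)⁻¹) ^ 2
        ≥ 200 * svdRisk P D lam δ ε τ μ) :
    (P {ω | m ≤ τ (fun j => if 1 ≤ j ∧ j ≤ D then lam j * μ j + δ * ε j ω else 0)}).toReal
      ≤ 0.9 :=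
  lower_stop_probability_general P D lam μ δ hδ hlam_pos ε hεmeas hεgauss τ hτmeas m hm1 hmD hVm
end

section
/- For nonnegative weights a_1,…,a_D and i.i.d. standard Gaussians ε_1,…,ε_D, for every x > 0: P( Σ_{i=1}^D a_i (ε_i² − 1) < −2‖a‖√x ) < e^{−x}, where ‖a‖ denotes the Euclidean norm of (a_1,…,a_D). -/
open MeasureTheory ProbabilityTheory Real Finset

/-!
Chernoff's bound at `λ = √x / ‖a‖`. The law of `ε² - 1` has moment generating function
`t ↦ e^{-t} / √(1 - 2t)`, and for `t ≤ 0` this is at most `e^{t²}`, strictly for `t < 0`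
(equivalently `log (1 + u) > u - u² / 2` for `u > 0`). By independence the moment generating
function of `Σ aᵢ (εᵢ² - 1)` at `-λ` is therefore `< e^{λ² ‖a‖²} = e^x`, and Chernoff
gives `P(Σ aᵢ (εᵢ² - 1) ≤ -2‖a‖√x) < e^{-2x} e^x`.
-/

lemma exp_sub_sq_div_two_lt_one_add {u : ℝ} (hu : 0 < u) : exp (u - u ^ 2 / 2) < 1 + u := by
  have h : u - u ^ 2 / 2 ≤ 2 * u / (u + 2) := by
    rw [le_div_iff₀ (by linarith)]
    nlinarith [pow_pos hu 3]
  exact (lt_log_iff_exp_lt (by linarith)).1 (h.trans_lt (lt_log_one_add_of_pos hu))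

lemma integral_exp_mul_sq_gaussianReal {t : ℝ} (ht : t < 1 / 2) :
    ∫ y, exp (t * y ^ 2) ∂gaussianReal 0 1 = (√(1 - 2 * t))⁻¹ := by
  have hb : 0 < 1 / 2 - t := by linarith
  have hpdf (y : ℝ) : gaussianPDFReal 0 1 y • exp (t * y ^ 2)
      = (√(2 * π))⁻¹ * exp (-(1 / 2 - t) * y ^ 2) := by
    simp only [gaussianPDFReal, NNReal.coe_one, mul_one, sub_zero, smul_eq_mul, mul_assoc,
      ← exp_add]
    ring_nf
  simp_rw [integral_gaussianReal_eq_integral_smul one_ne_zero, hpdf, integral_const_mul,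
    integral_gaussian]
  rw [show 1 - 2 * t = 2 * (1 / 2 - t) by ring, sqrt_div pi_pos.le, sqrt_mul zero_le_two,
    sqrt_mul zero_le_two]
  have := sqrt_pos.2 pi_pos
  have := sqrt_pos.2 hb
  field_simp

lemma mgf_sq_sub_one_gaussianReal {t : ℝ} (ht : t < 1 / 2) :
    mgf (fun y ↦ y ^ 2 - 1) (gaussianReal 0 1) t = exp (-t) * (√(1 - 2 * t))⁻¹ := by
  simp_rw [sub_eq_add_neg, mgf_add_const, mgf, ← sub_eq_add_neg,
    integral_exp_mul_sq_gaussianReal ht]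
  ring_nf

lemma mgf_sq_sub_one_gaussianReal_lt_exp_sq {t : ℝ} (ht : t < 0) :
    mgf (fun y ↦ y ^ 2 - 1) (gaussianReal 0 1) t < exp (t ^ 2) := by
  have h1 : 0 < 1 - 2 * t := by linarith
  have h_exp : exp (-t - t ^ 2) < √(1 - 2 * t) := by
    rw [lt_sqrt (exp_pos _).le, ← exp_nat_mul]
    convert exp_sub_sq_div_two_lt_one_add (u := -2 * t) (by linarith) using 2 <;> ring
  rw [mgf_sq_sub_one_gaussianReal (by linarith), ← div_eq_mul_inv,
    div_lt_iff₀ (sqrt_pos.2 h1)]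
  calc exp (-t) = exp (t ^ 2) * exp (-t - t ^ 2) := by rw [← exp_add]; ring_nf
    _ < exp (t ^ 2) * √(1 - 2 * t) := by gcongr

lemma mgf_sq_sub_one_gaussianReal_le_exp_sq {t : ℝ} (ht : t ≤ 0) :
    mgf (fun y ↦ y ^ 2 - 1) (gaussianReal 0 1) t ≤ exp (t ^ 2) := by
  rcases ht.lt_or_eq with ht | rfl
  · exact (mgf_sq_sub_one_gaussianReal_lt_exp_sq ht).le
  · simp

lemma mgf_sq_sub_one_gaussianReal_pos {t : ℝ} (ht : t < 1 / 2) :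
    0 < mgf (fun y ↦ y ^ 2 - 1) (gaussianReal 0 1) t := by
  rw [mgf_sq_sub_one_gaussianReal ht]
  have : 0 < 1 - 2 * t := by linarith
  positivity

lemma ProbabilityTheory.iIndepFun.mgf_sum_mul_comp {Ω β ι : Type*} [MeasurableSpace Ω]
    [MeasurableSpace β] [Fintype ι] {P : Measure Ω} {μ : Measure β} {X : ι → Ω → β}
    (h_indep : iIndepFun X P)
    (h_meas : ∀ i, Measurable (X i)) (h_law : ∀ i, P.map (X i) = μ) {f : β → ℝ}
    (hf : Measurable f) (a : ι → ℝ) (t : ℝ) :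
    mgf (fun ω ↦ ∑ i, a i * f (X i ω)) P t = ∏ i, mgf f μ (a i * t) := by
  have h_indep' : iIndepFun (fun i ω ↦ a i * f (X i ω)) P :=
    h_indep.comp (fun i y ↦ a i * f y) fun i ↦ hf.const_mul (a i)
  have hsum : (fun ω ↦ ∑ i, a i * f (X i ω)) = ∑ i, fun ω ↦ a i * f (X i ω) :=
    (sum_fn univ _).symm
  rw [hsum, h_indep'.mgf_sum (fun i ↦ (hf.comp (h_meas i)).const_mul (a i))]
  refine prod_congr rfl fun i _ ↦ ?_
  rw [mgf_const_mul, ← h_law i, mgf_map (h_meas i).aemeasurable (by fun_prop)]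
  rfl

lemma prod_mgf_sq_sub_one_gaussianReal_lt_exp {ι : Type*} [Fintype ι] {a : ι → ℝ}
    (ha : ∀ i, 0 ≤ a i) {j : ι} (hj : 0 < a j) {t : ℝ} (ht : t < 0) :
    ∏ i, mgf (fun y ↦ y ^ 2 - 1) (gaussianReal 0 1) (a i * t) <
      exp (t ^ 2 * ∑ i, a i ^ 2) := by
  have hneg i : a i * t ≤ 0 := mul_nonpos_of_nonneg_of_nonpos (ha i) ht.le
  calc _ < ∏ i, exp ((a i * t) ^ 2) :=
        prod_lt_prod (fun i _ ↦ mgf_sq_sub_one_gaussianReal_pos ((hneg i).trans_lt one_half_pos))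
          (fun i _ ↦ mgf_sq_sub_one_gaussianReal_le_exp_sq (hneg i))
          ⟨j, mem_univ j, mgf_sq_sub_one_gaussianReal_lt_exp_sq (mul_neg_of_pos_of_neg hj ht)⟩
    _ = exp (t ^ 2 * ∑ i, a i ^ 2) := by
        rw [← exp_sum, mul_sum]
        exact congrArg exp (sum_congr rfl fun i _ ↦ by ring)

lemma measureReal_sum_mul_sq_sub_one_le {Ω ι : Type*} [MeasurableSpace Ω] [Fintype ι]
    {P : Measure Ω} {ε : ι → Ω → ℝ} (h_meas : ∀ i, Measurable (ε i))
    (h_indep : iIndepFun ε P) (h_law : ∀ i, P.map (ε i) = gaussianReal 0 1) {a : ι → ℝ}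
    (ha : ∀ i, 0 ≤ a i) {l : ℝ} (hl : 0 ≤ l) (s : ℝ) :
    P.real {ω | ∑ i, a i * (ε i ω ^ 2 - 1) ≤ s} ≤
      exp (l * s) * ∏ i, mgf (fun y ↦ y ^ 2 - 1) (gaussianReal 0 1) (a i * -l) := by
  have := h_indep.isProbabilityMeasure
  have hmgf := h_indep.mgf_sum_mul_comp h_meas h_law (f := fun y ↦ y ^ 2 - 1) (by fun_prop) a (-l)
  have hint : Integrable (fun ω ↦ exp (-l * ∑ i, a i * (ε i ω ^ 2 - 1))) P :=
    mgf_pos_iff.1 <| hmgf ▸ prod_pos fun i _ ↦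
      mgf_sq_sub_one_gaussianReal_pos (by nlinarith [ha i])
  simpa only [neg_neg, hmgf] using measure_le_le_exp_mul_mgf s (neg_nonpos.2 hl) hint

/-- Laurent–Massart: for nonnegative weights `a_i` and i.i.d.
standard Gaussians `ε_i`,
`P(Σ a_i(ε_i² − 1) < −2‖a‖√x) < e^{−x}` for every `x > 0`. -/
theorem laurent_massart_lower_deviation
    {Ω : Type*} [MeasurableSpace Ω] (P : Measure Ω) [IsProbabilityMeasure P]
    (D : ℕ) (ε : Fin D → Ω → ℝ) (hεmeas : ∀ i, Measurable (ε i))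
    (hεindep : iIndepFun ε P)
    (hεgauss : ∀ i, Measure.map (ε i) P = gaussianReal 0 1)
    (a : Fin D → ℝ) (ha : ∀ i, 0 ≤ a i) (x : ℝ) (hx : 0 < x) :
    (P {ω | ∑ i, a i * ((ε i ω) ^ 2 - 1)
        < -2 * Real.sqrt (∑ i, (a i) ^ 2) * Real.sqrt x}).toReal
      < Real.exp (-x) := by
  by_cases h_pos : ∃ j, 0 < a j
  swap
  · have ha0 : a = 0 := funext fun i ↦ le_antisymm (not_lt.1 fun h ↦ h_pos ⟨i, h⟩) (ha i)
    simp [ha0, exp_pos]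
  obtain ⟨j, hj⟩ := h_pos
  set σ := √(∑ i, a i ^ 2)
  have hσ : 0 < σ := sqrt_pos.2 <| (pow_pos hj 2).trans_le <|
    single_le_sum (f := fun i ↦ a i ^ 2) (fun i _ ↦ sq_nonneg _) (mem_univ j)
  set l := √x / σ
  have hl : 0 < l := div_pos (sqrt_pos.2 hx) hσ
  have hlσ : l * σ = √x := div_mul_cancel₀ _ hσ.ne'
  set S := fun ω ↦ ∑ i, a i * (ε i ω ^ 2 - 1)
  calc P.real {ω | S ω < -2 * σ * √x}
      ≤ P.real {ω | S ω ≤ -2 * σ * √x} :=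
        measureReal_mono (Set.ofPred_subset_ofPred.2 fun _ ↦ le_of_lt)
    _ ≤ exp (l * (-2 * σ * √x)) *
          ∏ i, mgf (fun y ↦ y ^ 2 - 1) (gaussianReal 0 1) (a i * -l) :=
        measureReal_sum_mul_sq_sub_one_le hεmeas hεindep hεgauss ha hl.le _
    _ < exp (-2 * x) * exp ((-l) ^ 2 * ∑ i, a i ^ 2) := by
        rw [show l * (-2 * σ * √x) = -2 * (l * σ * √x) by ring, hlσ, mul_self_sqrt hx.le]
        gcongr
        exact prod_mgf_sq_sub_one_gaussianReal_lt_exp ha hj (neg_neg_of_pos hl)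
    _ = exp (-x) := by
        rw [neg_sq, ← sq_sqrt (sum_nonneg fun i _ ↦ sq_nonneg (a i)), ← mul_pow, hlσ,
          sq_sqrt hx.le, ← exp_add]
        ring_nf
end

section
/- For p > 2 and t > 0, letting f_p denote the chi-squared density with p degrees of freedom, the L¹-distance between f_p and its translate satisfies ∫_0^∞ |f_p(x−t) − f_p(x)| dx ≤ 2^{(2−p)/2} / Γ(p/2) · t · (p−2)^{(p−2)/2} e^{−(p−2)/2}, which is further bounded by t·e/√(πp). -/
/-!
The χ²(p) density `f` is unimodal with mode `m = p - 2`. For any integrable unimodal `f`,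
`|f (x - t) - f x| = 2 max (f (x - t)) (f x) - f (x - t) - f x`, and the maximum is dominated by
`f` on `(-∞, m]`, by `f m` on `(m, m + t]` and by `f (· - t)` beyond; integrating gives
`∫ |f (x - t) - f x| ≤ 2 t f m`, which is the middle expression.

With `y = p / 2 - 1` the second inequality reads `√(2π(y+1)) y^y e^{-y} ≤ e Γ(y+1)`, a weak form
of Stirling's inequality. Splitting `Γ(y+1) = ∫ e^{-x} x^y` at `x = y` gives
`Γ(y+1) ≥ y^y e^{-y} (2y+1)/(y+1)`, which suffices for `y ≤ 3/2`; Laplace's bound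
`x^y e^{-x} ≥ y^y e^{-y} e^{-(x-y)²/(2y)}` on `[y, ∞)` gives `Γ(y+1) ≥ y^y e^{-y} √(2πy)/2`,
which suffices for `y ≥ 3/2`.
-/

open MeasureTheory Real Set

theorem integral_abs_comp_sub_sub_le_of_unimodal {f : ℝ → ℝ} {m t : ℝ} (hf : Integrable f)
    (hmono : MonotoneOn f (Iic m)) (hanti : AntitoneOn f (Ici m)) (ht : 0 ≤ t) :
    ∫ x, |f (x - t) - f x| ≤ 2 * t * f m := by
  have hpeak : ∀ x, f x ≤ f m := fun x ↦ (le_total x m).elim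
    (fun h ↦ hmono h self_mem_Iic h) (fun h ↦ hanti self_mem_Ici h h)
  set g : ℝ → ℝ := (Iic m).indicator f + (Ioc m (m + t)).indicator (fun _ ↦ f m)
    + fun x ↦ (Ioi m).indicator f (x - t) with hg_def
  have hmax : ∀ x, max (f (x - t)) (f x) ≤ g x := by
    intro x
    rcases le_or_gt x m with hxm | hmx
    · have hout : x - t ∉ Ioi m := by rw [mem_Ioi, not_lt]; linarith
      have hle : f (x - t) ≤ f x := hmono (mem_Iic.2 (by linarith)) hxm (by linarith)
      simp [g, hxm, hout, hle]
    rcases le_or_gt x (m + t) with hxt | htx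
    · have hout : x - t ∉ Ioi m := by rw [mem_Ioi, not_lt]; linarith
      simp [g, hmx, hxt, hout, hmx.not_ge, hpeak]
    · have hin : x - t ∈ Ioi m := by rw [mem_Ioi]; linarith
      have hle : f x ≤ f (x - t) := hanti (mem_Ici.2 (by linarith)) hmx.le (by linarith)
      simp [g, hmx.not_ge, htx.not_ge, hin, hle]
  have hf_left : Integrable ((Iic m).indicator f) := hf.indicator measurableSet_Iic
  have hf_right : Integrable ((Ioi m).indicator f) := hf.indicator measurableSet_Ioi
  have hplateau : Integrable ((Ioc m (m + t)).indicator fun _ ↦ f m) :=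
    (integrable_indicator_iff measurableSet_Ioc).2 (integrableOn_const (by simp))
  have hg_int : Integrable g := (hf_left.add hplateau).add (hf_right.comp_sub_right t)
  have hg : ∫ x, g x = (∫ x, f x) + t * f m := by
    rw [hg_def, integral_add' (hf_left.add hplateau) (hf_right.comp_sub_right t),
      integral_add' hf_left hplateau, integral_sub_right_eq_self (fun x ↦ (Ioi m).indicator f x),
      integral_indicator measurableSet_Iic, integral_indicator measurableSet_Ioc,
      integral_indicator measurableSet_Ioi, setIntegral_const,
      Real.volume_real_Ioc_of_le (by linarith),
      ← intervalIntegral.integral_Iic_add_Ioi hf.integrableOn hf.integrableOn, smul_eq_mul]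
    ring
  have hbound : Integrable fun x ↦ 2 * g x - f (x - t) :=
    (hg_int.const_mul 2).sub (hf.comp_sub_right t)
  calc ∫ x, |f (x - t) - f x| ≤ ∫ x, (2 * g x - f (x - t) - f x) := by
        refine integral_mono (hf.comp_sub_right t |>.sub hf).abs (hbound.sub hf) fun x ↦ ?_
        have := hmax x
        rw [abs_le]
        constructor <;> linarith [le_max_left (f (x - t)) (f x), le_max_right (f (x - t)) (f x)]
    _ = 2 * t * f m := by
        rw [integral_sub hbound hf, integral_sub (hg_int.const_mul 2) (hf.comp_sub_right t),
          integral_const_mul, hg, integral_sub_right_eq_self]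
        ring

theorem rpow_mul_exp_neg_half_monotoneOn {a : ℝ} (ha : 0 ≤ a) :
    MonotoneOn (fun x : ℝ ↦ x ^ a * exp (-x / 2)) (Ioc 0 (2 * a)) := by
  rintro x ⟨hx, -⟩ y ⟨hy, hy2a⟩ hxy
  simp only [rpow_def_of_pos hx, rpow_def_of_pos hy, ← exp_add, exp_le_exp]
  have hlog : 1 - x / y ≤ log y - log x := by
    rw [← log_div hy.ne' hx.ne', ← inv_div]
    exact one_sub_inv_le_log_of_pos (div_pos hy hx)
  have : (y - x) / 2 ≤ a * (1 - x / y) := by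
    rw [one_sub_div hy.ne', mul_div_assoc', le_div_iff₀ hy]
    nlinarith
  linarith [mul_le_mul_of_nonneg_left hlog ha]

theorem rpow_mul_exp_neg_half_antitoneOn {a : ℝ} (ha : 0 < a) :
    AntitoneOn (fun x : ℝ ↦ x ^ a * exp (-x / 2)) (Ici (2 * a)) := by
  rintro x hx y - hxy
  simp only [mem_Ici] at hx
  have hx0 : 0 < x := by linarith
  have hy0 : 0 < y := hx0.trans_le hxy
  simp only [rpow_def_of_pos hx0, rpow_def_of_pos hy0, ← exp_add, exp_le_exp]
  have hlog : log y - log x ≤ y / x - 1 := by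
    rw [← log_div hy0.ne' hx0.ne']
    exact log_le_sub_one_of_pos (div_pos hy0 hx0)
  have : a * (y / x - 1) ≤ (y - x) / 2 := by
    rw [div_sub_one hx0.ne', mul_div_assoc', div_le_iff₀ hx0]
    nlinarith
  linarith [mul_le_mul_of_nonneg_left hlog ha.le]

noncomputable def chiSqPDF (p x : ℝ) : ℝ :=
  if 0 < x then x ^ (p / 2 - 1) * exp (-x / 2) / (2 ^ (p / 2) * Gamma (p / 2)) else 0

theorem chiSqPDF_nonneg {p : ℝ} (hp : 0 ≤ p) (x : ℝ) : 0 ≤ chiSqPDF p x := by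
  unfold chiSqPDF
  split_ifs
  · have := Gamma_nonneg_of_nonneg (by linarith : 0 ≤ p / 2)
    positivity
  · exact le_rfl

theorem integrable_chiSqPDF {p : ℝ} (hp : 0 < p) : Integrable (chiSqPDF p) := by
  have : chiSqPDF p = (Ioi 0).indicator
      fun x ↦ x ^ (p / 2 - 1) * exp (-x / 2) / (2 ^ (p / 2) * Gamma (p / 2)) := by
    ext x
    simp [chiSqPDF, indicator]
  rw [this, integrable_indicator_iff measurableSet_Ioi]
  refine IntegrableOn.congr_fun
    ((integrableOn_rpow_mul_exp_neg_mul_rpow (s := p / 2 - 1) (by linarith) zero_lt_one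
      one_half_pos).div_const (2 ^ (p / 2) * Gamma (p / 2)))
    (fun x _ ↦ ?_) measurableSet_Ioi
  simp only [rpow_one, neg_div, neg_mul, one_div, inv_mul_eq_div]

theorem chiSqPDF_monotoneOn {p : ℝ} (hp : 2 ≤ p) : MonotoneOn (chiSqPDF p) (Iic (p - 2)) := by
  intro x _ y hy hxy
  rcases le_or_gt x 0 with hx | hx
  · rw [chiSqPDF, if_neg hx.not_gt]
    exact chiSqPDF_nonneg (by linarith) y
  have hy0 : 0 < y := hx.trans_le hxy
  simp only [mem_Iic] at hy
  simp only [chiSqPDF, if_pos hx, if_pos hy0]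
  have := Gamma_pos_of_pos (by linarith : 0 < p / 2)
  refine div_le_div_of_nonneg_right ?_ (by positivity)
  exact rpow_mul_exp_neg_half_monotoneOn (a := p / 2 - 1) (by linarith) ⟨hx, by linarith⟩
    ⟨hy0, by linarith⟩ hxy

theorem chiSqPDF_antitoneOn {p : ℝ} (hp : 2 < p) : AntitoneOn (chiSqPDF p) (Ici (p - 2)) := by
  intro x hx y hy hxy
  simp only [mem_Ici] at hx hy
  simp only [chiSqPDF, if_pos (by linarith : 0 < x), if_pos (by linarith : 0 < y)]
  have := Gamma_pos_of_pos (by linarith : 0 < p / 2)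
  refine div_le_div_of_nonneg_right ?_ (by positivity)
  exact rpow_mul_exp_neg_half_antitoneOn (a := p / 2 - 1) (by linarith) (mem_Ici.2 (by linarith))
    (mem_Ici.2 (by linarith)) hxy

theorem two_mul_chiSqPDF_sub_two {p : ℝ} (hp : 2 < p) :
    2 * chiSqPDF p (p - 2)
      = 2 ^ ((2 - p) / 2) / Gamma (p / 2) * (p - 2) ^ ((p - 2) / 2) * exp (-(p - 2) / 2) := by
  rw [chiSqPDF, if_pos (by linarith), show (2 - p) / 2 = 1 - p / 2 by ring, rpow_sub two_pos,
    rpow_one, show (p - 2) / 2 = p / 2 - 1 by ring]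
  field_simp

theorem sub_sq_div_two_le_log_one_add {u : ℝ} (hu : 0 ≤ u) : u - u ^ 2 / 2 ≤ log (1 + u) := by
  have hderiv : ∀ v ∈ Ici (0 : ℝ),
      HasDerivAt (fun v ↦ log (1 + v) - v + v ^ 2 / 2) (v ^ 2 / (1 + v)) v := by
    intro v hv
    have hv1 : 1 + v ≠ 0 := by simp only [mem_Ici] at hv; positivity
    refine ((((hasDerivAt_id' v).const_add 1).log hv1).sub (hasDerivAt_id' v)).add
      ((hasDerivAt_pow 2 v).div_const 2) |>.congr_deriv ?_
    field_simp
    ring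
  have hmono : MonotoneOn (fun v ↦ log (1 + v) - v + v ^ 2 / 2) (Ici 0) :=
    monotoneOn_of_hasDerivWithinAt_nonneg (convex_Ici 0)
      (fun v hv ↦ (hderiv v hv).continuousAt.continuousWithinAt)
      (fun v hv ↦ (hderiv v (interior_subset hv)).hasDerivWithinAt)
      (fun v hv ↦ by have : 0 ≤ v := interior_subset hv; positivity)
  have := hmono self_mem_Ici hu hu
  simp only [add_zero, log_one] at this
  linarith

theorem integral_Ioi_exp_neg_sub_sq_div (c s : ℝ) :
    ∫ x in Ioi c, exp (-(x - c) ^ 2 / (2 * s)) = √(2 * π * s) / 2 := by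
  have := (measurePreserving_sub_right volume c).setIntegral_preimage_emb
    (measurableEmbedding_subRight c) (fun x ↦ exp (-(2 * s)⁻¹ * x ^ 2)) (Ioi 0)
  rw [preimage_sub_const_Ioi, zero_add, integral_gaussian_Ioi, div_inv_eq_mul] at this
  rw [show 2 * π * s = π * (2 * s) by ring, ← this]
  congr 1 with x
  ring_nf

theorem integrableOn_exp_neg_mul_rpow_Ioi {y : ℝ} (hy : 0 ≤ y) :
    IntegrableOn (fun x ↦ exp (-x) * x ^ y) (Ioi 0) := by
  simpa using GammaIntegral_convergent (s := y + 1) (by linarith)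

theorem Gamma_add_one_eq_integral_Ioc_add_integral_Ioi {y : ℝ} (hy : 0 < y) :
    Gamma (y + 1) = (∫ x in Ioc 0 y, exp (-x) * x ^ y) + ∫ x in Ioi y, exp (-x) * x ^ y := by
  have hint := integrableOn_exp_neg_mul_rpow_Ioi hy.le
  rw [Gamma_eq_integral (by linarith), add_sub_cancel_right, ← Ioc_union_Ioi_eq_Ioi hy.le,
    setIntegral_union (Ioc_disjoint_Ioi le_rfl) measurableSet_Ioi
      (hint.mono_set Ioc_subset_Ioi_self) (hint.mono_set (Ioi_subset_Ioi hy.le))]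

theorem exp_neg_mul_rpow_div_le_integral_Ioc {y : ℝ} (hy : 0 < y) :
    exp (-y) * (y ^ (y + 1) / (y + 1)) ≤ ∫ x in Ioc 0 y, exp (-x) * x ^ y := by
  have hpow : IntegrableOn (fun x : ℝ ↦ x ^ y) (Ioc 0 y) :=
    (intervalIntegral.intervalIntegrable_rpow' (by linarith)).1
  have hint : ∫ x in Ioc 0 y, x ^ y = y ^ (y + 1) / (y + 1) := by
    rw [← intervalIntegral.integral_of_le hy.le, integral_rpow (.inl (by linarith)),
      zero_rpow (by linarith), sub_zero]
  rw [← hint, ← integral_const_mul]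
  exact setIntegral_mono_on (hpow.const_mul _)
    ((integrableOn_exp_neg_mul_rpow_Ioi hy.le).mono_set Ioc_subset_Ioi_self) measurableSet_Ioc
    fun x hx ↦ mul_le_mul_of_nonneg_right (exp_le_exp.2 (by linarith [hx.2]))
      (rpow_nonneg hx.1.le _)

theorem rpow_self_mul_exp_neg_le_integral_Ioi {y : ℝ} (hy : 0 ≤ y) :
    y ^ y * exp (-y) ≤ ∫ x in Ioi y, exp (-x) * x ^ y := by
  rw [← integral_exp_neg_Ioi, ← integral_const_mul]
  refine setIntegral_mono_on ((integrableOn_exp_neg_Ioi y).const_mul _)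
    ((integrableOn_exp_neg_mul_rpow_Ioi hy).mono_set (Ioi_subset_Ioi hy)) measurableSet_Ioi
    fun x hx ↦ ?_
  rw [mul_comm]
  exact mul_le_mul_of_nonneg_left (rpow_le_rpow hy (le_of_lt hx) hy) (exp_pos _).le

theorem rpow_self_mul_exp_neg_mul_exp_neg_sq_le {x y : ℝ} (hy : 0 < y) (hxy : y ≤ x) :
    y ^ y * exp (-y) * exp (-(x - y) ^ 2 / (2 * y)) ≤ exp (-x) * x ^ y := by
  have hx : 0 < x := hy.trans_le hxy
  have hlog := sub_sq_div_two_le_log_one_add (div_nonneg (sub_nonneg.2 hxy) hy.le)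
  rw [show 1 + (x - y) / y = x / y by field_simp; ring, log_div hx.ne' hy.ne'] at hlog
  rw [rpow_def_of_pos hy, rpow_def_of_pos hx, ← exp_add, ← exp_add, ← exp_add, exp_le_exp]
  have := mul_le_mul_of_nonneg_left hlog hy.le
  have e : y * ((x - y) / y - ((x - y) / y) ^ 2 / 2) = (x - y) - (x - y) ^ 2 / (2 * y) := by
    field_simp
  rw [e] at this
  rw [neg_div]
  linarith

theorem rpow_self_mul_exp_neg_mul_sqrt_le_integral_Ioi {y : ℝ} (hy : 0 < y) :
    y ^ y * exp (-y) * (√(2 * π * y) / 2) ≤ ∫ x in Ioi y, exp (-x) * x ^ y := by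
  have hgauss := integral_Ioi_exp_neg_sub_sq_div y y
  have hint : IntegrableOn (fun x ↦ exp (-(x - y) ^ 2 / (2 * y))) (Ioi y) :=
    .of_integral_ne_zero (by rw [hgauss]; positivity)
  rw [← hgauss, ← integral_const_mul]
  exact setIntegral_mono_on (hint.const_mul _)
    ((integrableOn_exp_neg_mul_rpow_Ioi hy.le).mono_set (Ioi_subset_Ioi hy.le)) measurableSet_Ioi
    fun x hx ↦ rpow_self_mul_exp_neg_mul_exp_neg_sq_le hy (le_of_lt hx)

theorem sqrt_mul_rpow_self_mul_exp_neg_le_exp_one_mul_Gamma {y : ℝ} (hy : 0 < y) :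
    √(2 * π * (y + 1)) * (y ^ y * exp (-y)) ≤ exp 1 * Gamma (y + 1) := by
  have he : 7.29 < exp 1 ^ 2 := by nlinarith [exp_one_gt_d9]
  have hΓ := Gamma_add_one_eq_integral_Ioc_add_integral_Ioi hy
  have hIoc := exp_neg_mul_rpow_div_le_integral_Ioc hy
  rcases le_total y (3 / 2) with hy' | hy'
  · have hlow : y ^ y * exp (-y) * ((2 * y + 1) / (y + 1)) ≤ Gamma (y + 1) := by
      have := rpow_self_mul_exp_neg_le_integral_Ioi hy.le
      rw [rpow_add_one hy.ne'] at hIoc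
      have e : y ^ y * exp (-y) * ((2 * y + 1) / (y + 1))
          = exp (-y) * (y ^ y * y / (y + 1)) + y ^ y * exp (-y) := by
        field_simp; ring
      linarith
    have hsqrt : √(2 * π * (y + 1)) ≤ exp 1 * ((2 * y + 1) / (y + 1)) := by
      refine sqrt_le_iff.2 ⟨by positivity, ?_⟩
      rw [mul_pow, div_pow, mul_div_assoc', le_div_iff₀ (by positivity)]
      have hpoly : 3.15 * 2 * (y + 1) ^ 3 ≤ 7.29 * (2 * y + 1) ^ 2 := by
        nlinarith [mul_le_mul_of_nonneg_left hy' (sq_nonneg y)]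
      nlinarith [mul_le_mul_of_nonneg_right pi_lt_d2.le (by positivity : (0 : ℝ) ≤ 2 * (y + 1) ^ 3),
        mul_le_mul_of_nonneg_right he.le (by positivity : (0 : ℝ) ≤ (2 * y + 1) ^ 2)]
    calc √(2 * π * (y + 1)) * (y ^ y * exp (-y))
        ≤ exp 1 * ((2 * y + 1) / (y + 1)) * (y ^ y * exp (-y)) := by gcongr
      _ ≤ exp 1 * Gamma (y + 1) := by rw [mul_assoc]; gcongr; linarith
  · have hlow : y ^ y * exp (-y) * (√(2 * π * y) / 2) ≤ Gamma (y + 1) := by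
      have := rpow_self_mul_exp_neg_mul_sqrt_le_integral_Ioi hy
      have : 0 ≤ exp (-y) * (y ^ (y + 1) / (y + 1)) := by positivity
      linarith
    have hsqrt : √(2 * π * (y + 1)) ≤ exp 1 * (√(2 * π * y) / 2) := by
      have h4 : 4 * (y + 1) ≤ exp 1 ^ 2 * y := by nlinarith
      calc √(2 * π * (y + 1)) ≤ √((exp 1 / 2) ^ 2 * (2 * π * y)) :=
            sqrt_le_sqrt (by nlinarith [mul_le_mul_of_nonneg_left h4 pi_pos.le])
        _ = exp 1 * (√(2 * π * y) / 2) := by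
            rw [sqrt_mul (by positivity), sqrt_sq (by positivity)]; ring
    calc √(2 * π * (y + 1)) * (y ^ y * exp (-y))
        ≤ exp 1 * (√(2 * π * y) / 2) * (y ^ y * exp (-y)) := by gcongr
      _ ≤ exp 1 * Gamma (y + 1) := by rw [mul_assoc]; gcongr; linarith

theorem two_mul_chiSqPDF_sub_two_le {p : ℝ} (hp : 2 < p) :
    2 * chiSqPDF p (p - 2) ≤ exp 1 / √(π * p) := by
  obtain ⟨y, hy, rfl⟩ : ∃ y, 0 < y ∧ p = 2 * y + 2 := ⟨(p - 2) / 2, by linarith, by ring⟩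
  have hΓ := Gamma_pos_of_pos (by linarith : 0 < y + 1)
  have hmode : 2 * chiSqPDF (2 * y + 2) (2 * y + 2 - 2) = y ^ y * exp (-y) / Gamma (y + 1) := by
    rw [chiSqPDF, if_pos (by linarith), show (2 * y + 2) / 2 = y + 1 by ring,
      show 2 * y + 2 - 2 = 2 * y by ring, add_sub_cancel_right, mul_rpow zero_le_two hy.le,
      rpow_add_one two_ne_zero, show -(2 * y) / 2 = -y by ring]
    field_simp
  rw [hmode, show π * (2 * y + 2) = 2 * π * (y + 1) by ring, div_le_div_iff₀ hΓ (by positivity),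
    mul_comm]
  exact sqrt_mul_rpow_self_mul_exp_neg_le_exp_one_mul_Gamma hy

/-- L¹-distance between the χ²(p) density and its translate.
For `p > 2`, `t > 0` and `f_p` the chi-squared density with `p` degrees of
freedom, `∫_0^∞ |f_p(x−t) − f_p(x)| dx ≤ 2^{(2−p)/2}/Γ(p/2) · t (p−2)^{(p−2)/2}
e^{−(p−2)/2} ≤ t e/√(πp)`. -/
theorem chi_squared_density_translate_L1
    (p t : ℝ) (hp : 2 < p) (ht : 0 < t)
    (f : ℝ → ℝ)
    (hf : ∀ x : ℝ, f x =
      if 0 < x then x ^ (p / 2 - 1) * Real.exp (-x / 2)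
          / (2 ^ (p / 2) * Real.Gamma (p / 2))
      else 0) :
    (∫ x in Set.Ioi (0 : ℝ), |f (x - t) - f x|)
        ≤ 2 ^ ((2 - p) / 2) / Real.Gamma (p / 2) * t
            * (p - 2) ^ ((p - 2) / 2) * Real.exp (-(p - 2) / 2)
      ∧ 2 ^ ((2 - p) / 2) / Real.Gamma (p / 2) * t
            * (p - 2) ^ ((p - 2) / 2) * Real.exp (-(p - 2) / 2)
          ≤ t * Real.exp 1 / Real.sqrt (π * p) := by
  obtain rfl : f = chiSqPDF p := funext hf
  have hconst : 2 ^ ((2 - p) / 2) / Gamma (p / 2) * t * (p - 2) ^ ((p - 2) / 2)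
      * exp (-(p - 2) / 2) = t * (2 * chiSqPDF p (p - 2)) := by
    rw [two_mul_chiSqPDF_sub_two hp]
    ring
  rw [hconst]
  constructor
  · calc ∫ x in Ioi 0, |chiSqPDF p (x - t) - chiSqPDF p x|
        ≤ ∫ x, |chiSqPDF p (x - t) - chiSqPDF p x| :=
          setIntegral_le_integral ((integrable_chiSqPDF (by linarith)).comp_sub_right t
            |>.sub (integrable_chiSqPDF (by linarith))).abs (ae_of_all _ fun _ ↦ abs_nonneg _)
      _ ≤ 2 * t * chiSqPDF p (p - 2) :=
          integral_abs_comp_sub_sub_le_of_unimodal (integrable_chiSqPDF (by linarith))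
            (chiSqPDF_monotoneOn hp.le) (chiSqPDF_antitoneOn hp) ht.le
      _ = t * (2 * chiSqPDF p (p - 2)) := by ring
  · rw [mul_div_assoc]
    exact mul_le_mul_of_nonneg_left (two_mul_chiSqPDF_sub_two_le hp) ht.le
end

section
/- Under the polynomial spectral decay condition C_A^{-1} i^{-p} ≤ λ_i ≤ C_A i^{-p} for 1 ≤ i ≤ D, the interpolated strong variance V_t = δ²( Σ_{i=1}^{⌊t⌋} λ_i^{-2} + (t − ⌊t⌋) λ_{⌊t⌋+1}^{-2} ) satisfies, for all t ∈ [1,D], λ_{⌊t⌋+1}^{-2} t δ² ≤ (1+2p) 2^{2p+1} C_A⁴ V_t. -/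
/-!
With `n = ⌊t⌋`, the decay bounds give `λ_{n+1}^{-2} t ≤ C_A² (n+1)^{2p+1} ≤ C_A² 2^{2p+1} n^{2p+1}`,
while `Σ_{i ≤ n} λ_i^{-2} ≥ C_A^{-2} Σ_{i ≤ n} i^{2p} ≥ C_A^{-2} n^{2p+1} / (2p+1)` by comparing the
sum of the increasing function `x ↦ x^{2p}` with its integral over `[0, n]`.
The interpolation term of `V_t` is nonnegative and is dropped.
-/

open Real Finset

theorem rpow_add_one_div_le_sum_Icc_rpow {q : ℝ} (hq : 0 ≤ q) (n : ℕ) :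
    (n : ℝ) ^ (q + 1) / (q + 1) ≤ ∑ i ∈ Icc 1 n, (i : ℝ) ^ q := by
  have hmono : MonotoneOn (fun x : ℝ => x ^ q) (Set.Icc 0 (0 + n)) :=
    fun x hx y _ hxy => rpow_le_rpow hx.1 hxy hq
  have hint : ∫ x in (0 : ℝ)..0 + n, x ^ q = (n : ℝ) ^ (q + 1) / (q + 1) := by
    rw [integral_rpow (Or.inl (by linarith)), zero_rpow (by linarith), zero_add, sub_zero]
  have hsum : ∑ i ∈ range n, ((0 : ℝ) + ↑(i + 1)) ^ q = ∑ i ∈ Icc 1 n, (i : ℝ) ^ q := by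
    rw [← Ico_add_one_right_eq_Icc, sum_Ico_eq_sum_range]
    simp only [Nat.add_sub_cancel, zero_add, add_comm 1]
  exact hint ▸ hsum ▸ hmono.integral_le_sum

theorem inv_sq_le_of_inv_mul_rpow_neg_le {C x l p : ℝ} (hC : 0 < C) (hx : 0 < x)
    (h : C⁻¹ * x ^ (-p) ≤ l) : l⁻¹ ^ 2 ≤ C ^ 2 * x ^ (2 * p) := by
  have hpos : 0 < C⁻¹ * x ^ (-p) := by positivity
  have hinv : l⁻¹ ≤ C * x ^ p := by
    have := inv_anti₀ hpos h
    rwa [mul_inv, inv_inv, rpow_neg hx.le, inv_inv] at this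
  calc l⁻¹ ^ 2 ≤ (C * x ^ p) ^ 2 := pow_le_pow_left₀ (inv_nonneg.2 (hpos.trans_le h).le) hinv 2
    _ = C ^ 2 * x ^ (2 * p) := by rw [mul_pow, ← rpow_mul_natCast hx.le, mul_comm p]; norm_num

theorem inv_sq_mul_rpow_le_inv_sq {C x l p : ℝ} (hC : 0 < C) (hx : 0 < x) (hl : 0 < l)
    (h : l ≤ C * x ^ (-p)) : C⁻¹ ^ 2 * x ^ (2 * p) ≤ l⁻¹ ^ 2 := by
  have hinv : C⁻¹ * x ^ p ≤ l⁻¹ := by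
    have := inv_anti₀ hl h
    rwa [rpow_neg hx.le, mul_inv, inv_inv] at this
  calc C⁻¹ ^ 2 * x ^ (2 * p) = (C⁻¹ * x ^ p) ^ 2 := by
        rw [mul_pow, ← rpow_mul_natCast hx.le, mul_comm p]; norm_num
    _ ≤ l⁻¹ ^ 2 := pow_le_pow_left₀ (by positivity) hinv 2

theorem add_one_rpow_le_two_rpow_mul_rpow {x q : ℝ} (hx : 1 ≤ x) (hq : 0 ≤ q) :
    (x + 1) ^ q ≤ 2 ^ q * x ^ q := by
  rw [← mul_rpow zero_le_two (by linarith)]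
  exact rpow_le_rpow (by linarith) (by linarith) hq

theorem interpolated_variance_lower_bound_general
    (D : ℕ) (p C_A δ t : ℝ) (lam : ℕ → ℝ)
    (hp : 0 ≤ p) (hCA : 1 ≤ C_A)
    (hPSD : ∀ i : ℕ, 1 ≤ i → i ≤ D →
      C_A⁻¹ * ((i : ℝ)) ^ (-p) ≤ lam i ∧ lam i ≤ C_A * ((i : ℝ)) ^ (-p))
    (ht1 : 1 ≤ t) (hfl : ⌊t⌋₊ + 1 ≤ D) :
    ((lam (⌊t⌋₊ + 1))⁻¹) ^ 2 * t * δ ^ 2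
      ≤ (1 + 2 * p) * 2 ^ (2 * p + 1) * C_A ^ 4
          * (δ ^ 2 * ((∑ i ∈ Finset.Icc 1 ⌊t⌋₊, ((lam i)⁻¹) ^ 2)
              + (t - ⌊t⌋₊) * ((lam (⌊t⌋₊ + 1))⁻¹) ^ 2)) := by
  set n := ⌊t⌋₊
  have hC : 0 < C_A := one_pos.trans_le hCA
  have hn : (1 : ℝ) ≤ n := by exact_mod_cast Nat.le_floor (by exact_mod_cast ht1)
  have hnt : (n : ℝ) ≤ t := Nat.floor_le (by linarith)
  have htn : t ≤ n + 1 := (Nat.lt_floor_add_one t).le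
  have hlam_pos : ∀ i, 1 ≤ i → i ≤ D → 0 < lam i := fun i hi hiD =>
    (by positivity : 0 < C_A⁻¹ * (i : ℝ) ^ (-p)).trans_le (hPSD i hi hiD).1
  have hnext : (lam (n + 1))⁻¹ ^ 2 ≤ C_A ^ 2 * ((n : ℝ) + 1) ^ (2 * p) := by
    simpa using inv_sq_le_of_inv_mul_rpow_neg_le hC (by positivity) (hPSD (n + 1) le_add_self hfl).1
  have hhead : C_A⁻¹ ^ 2 * ((n : ℝ) ^ (2 * p + 1) / (2 * p + 1))
      ≤ ∑ i ∈ Icc 1 n, (lam i)⁻¹ ^ 2 := by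
    calc C_A⁻¹ ^ 2 * ((n : ℝ) ^ (2 * p + 1) / (2 * p + 1))
        ≤ C_A⁻¹ ^ 2 * ∑ i ∈ Icc 1 n, (i : ℝ) ^ (2 * p) := by
          gcongr; exact rpow_add_one_div_le_sum_Icc_rpow (by linarith) n
      _ = ∑ i ∈ Icc 1 n, C_A⁻¹ ^ 2 * (i : ℝ) ^ (2 * p) := mul_sum _ _ _
      _ ≤ _ := sum_le_sum fun i hi => ?_
    obtain ⟨hi1, hin⟩ := mem_Icc.1 hi
    have hiD : i ≤ D := by omega
    exact inv_sq_mul_rpow_le_inv_sq hC (by positivity) (hlam_pos i hi1 hiD) (hPSD i hi1 hiD).2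
  have htail : 0 ≤ (t - n) * (lam (n + 1))⁻¹ ^ 2 := mul_nonneg (by linarith) (by positivity)
  calc (lam (n + 1))⁻¹ ^ 2 * t * δ ^ 2
      ≤ C_A ^ 2 * ((n : ℝ) + 1) ^ (2 * p + 1) * δ ^ 2 := by
        rw [rpow_add_one (by positivity), ← mul_assoc]
        exact mul_le_mul_of_nonneg_right (mul_le_mul hnext htn (by linarith) (by positivity))
          (sq_nonneg δ)
    _ ≤ C_A ^ 2 * (2 ^ (2 * p + 1) * (n : ℝ) ^ (2 * p + 1)) * δ ^ 2 := by
        gcongr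
        exact add_one_rpow_le_two_rpow_mul_rpow hn (by linarith)
    _ = (1 + 2 * p) * 2 ^ (2 * p + 1) * C_A ^ 4
          * (δ ^ 2 * (C_A⁻¹ ^ 2 * ((n : ℝ) ^ (2 * p + 1) / (2 * p + 1)))) := by
        field_simp
        ring
    _ ≤ _ := by gcongr; linarith

/-- under polynomial spectral decay `PSD(p, C_A)`, the interpolated
strong variance `V_t` satisfies `λ_{⌊t⌋+1}^{-2} t δ² ≤ (1+2p) 2^{2p+1} C_A⁴ V_t`
for all `t ∈ [1, D]`. -/
theorem interpolated_variance_lower_bound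
    (D : ℕ) (p C_A δ t : ℝ) (lam : ℕ → ℝ)
    (hp : 0 ≤ p) (hCA : 1 ≤ C_A) (hδ : 0 < δ)
    (hPSD : ∀ i : ℕ, 1 ≤ i → i ≤ D →
      C_A⁻¹ * ((i : ℝ)) ^ (-p) ≤ lam i ∧ lam i ≤ C_A * ((i : ℝ)) ^ (-p))
    (ht1 : 1 ≤ t) (ht2 : t ≤ D) (hfl : ⌊t⌋₊ + 1 ≤ D) :
    ((lam (⌊t⌋₊ + 1))⁻¹) ^ 2 * t * δ ^ 2
      ≤ (1 + 2 * p) * 2 ^ (2 * p + 1) * C_A ^ 4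
          * (δ ^ 2 * ((∑ i ∈ Finset.Icc 1 ⌊t⌋₊, ((lam i)⁻¹) ^ 2)
              + (t - ⌊t⌋₊) * ((lam (⌊t⌋₊ + 1))⁻¹) ^ 2)) :=
  interpolated_variance_lower_bound_general D p C_A δ t lam hp hCA hPSD ht1 hfl
end

section
/- Let t* be the oracle-proxy index satisfying κ = Dδ² + B²_{t*,λ}(μ) − V_{t*,λ} (or the boundary case t* = m_0 with Dδ² + B²_{t*,λ}(μ) − V_{t*,λ} ≤ κ), and t_w the weakly balanced oracle t_w = inf{ t ≥ m_0 : B²_{t,λ}(μ) ≤ V_{t,λ} }. Then (B²_{t*,λ}(μ) − B²_{t_w,λ}(μ))_+ ≤ (κ − Dδ²)_+ and (V_{t*,λ} − V_{t_w,λ})_+ ≤ (Dδ² − κ)_+; consequently E[‖μ̂^(t*) − μ‖²_λ] ≤ E[‖μ̂^(t_w) − μ‖²_λ] + |κ − Dδ²|. -/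
/- The weak bias is continuous and non-increasing in `t` (each `λᵢ² μᵢ²` enters with a continuous
non-increasing coefficient), and the weak variance `t δ²` is non-decreasing, so `t_w` is the first
crossing point: `B²_{t_w} ≤ V_{t_w}`, with equality when `t_w > m₀`. If `t* < t_w`, the variance
gap is nonpositive and `B²_{t*} − B²_{t_w} ≤ B²_{t*} − V_{t*} ≤ κ − Dδ²`. If `t* ≥ t_w`, the bias
gap is nonpositive, and unless `t* = t_w` the index `t*` solves `Dδ² + B² − V = κ`, so
`B²_{t*} ≤ B²_{t_w} ≤ V_{t_w}` gives `V_{t*} − V_{t_w} ≤ Dδ² − κ`. The two bounds add up to the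
risk comparison. -/

open Real Finset

/-- Interpolated weak (squared) bias `B²_{t,λ}(μ)`. -/
noncomputable def weakBiasSq (D : ℕ) (lam μ : ℕ → ℝ) (t : ℝ) : ℝ :=
  (1 - Real.sqrt (t - ⌊t⌋₊)) ^ 2 * (lam (⌊t⌋₊ + 1)) ^ 2 * (μ (⌊t⌋₊ + 1)) ^ 2
    + ∑ i ∈ Finset.Icc (⌊t⌋₊ + 2) D, (lam i) ^ 2 * (μ i) ^ 2

/-- The coefficient of `λᵢ² μᵢ²` in `B²_{t,λ}(μ)` is `biasCoeff (t + 1 - i)`: it is `0` for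
`i ≤ ⌊t⌋`, `1` for `i ≥ ⌊t⌋ + 2`, and `(1 - √(t - ⌊t⌋))²` for `i = ⌊t⌋ + 1`. -/
noncomputable def biasCoeff (x : ℝ) : ℝ := (1 - min (√x) 1) ^ 2

lemma biasCoeff_of_nonpos {x : ℝ} (hx : x ≤ 0) : biasCoeff x = 1 := by
  simp [biasCoeff, Real.sqrt_eq_zero_of_nonpos hx]

lemma biasCoeff_of_one_le {x : ℝ} (hx : 1 ≤ x) : biasCoeff x = 0 := by
  simp [biasCoeff, Real.one_le_sqrt.mpr hx]

lemma biasCoeff_of_le_one {x : ℝ} (hx : x ≤ 1) : biasCoeff x = (1 - √x) ^ 2 := by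
  rw [biasCoeff, min_eq_left (Real.sqrt_le_one.mpr hx)]

lemma continuous_biasCoeff : Continuous biasCoeff := by
  unfold biasCoeff; fun_prop

lemma antitone_biasCoeff : Antitone biasCoeff := by
  intro x y hxy
  have hmono : min (√x) 1 ≤ min (√y) 1 := min_le_min_right 1 (Real.sqrt_le_sqrt hxy)
  exact pow_le_pow_left₀ (sub_nonneg.mpr (min_le_right _ _)) (by linarith) 2

lemma biasCoeff_mul_eq_ite (t : ℝ) (w : ℝ) {i : ℕ} (hi : 1 ≤ i) :
    biasCoeff (t + 1 - i) * w =
      (if i = ⌊t⌋₊ + 1 then (1 - √(t - ⌊t⌋₊)) ^ 2 * w else 0)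
        + (if ⌊t⌋₊ + 2 ≤ i then w else 0) := by
  have hfloor := Nat.lt_floor_add_one t
  rcases lt_trichotomy i (⌊t⌋₊ + 1) with hlt | rfl | hgt
  · have hti : (i : ℝ) ≤ t := (Nat.le_floor_iff' (by omega)).mp (by omega)
    rw [biasCoeff_of_one_le (by linarith), if_neg hlt.ne, if_neg (by omega)]
    ring
  · have hx : t + 1 - ((⌊t⌋₊ + 1 : ℕ) : ℝ) = t - ⌊t⌋₊ := by push_cast; ring
    rw [hx, biasCoeff_of_le_one (by linarith), if_pos rfl, if_neg (by omega), add_zero]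
  · have hit : t + 1 - i ≤ 0 := by
      have : (⌊t⌋₊ + 2 : ℝ) ≤ i := by exact_mod_cast hgt
      linarith
    rw [biasCoeff_of_nonpos hit, if_neg hgt.ne', if_pos (by omega)]
    ring

variable {D : ℕ} {lam μ : ℕ → ℝ}

theorem weakBiasSq_eq_sum (hμ0 : ∀ i, D < i → μ i = 0) (t : ℝ) :
    weakBiasSq D lam μ t = ∑ i ∈ Icc 1 D, biasCoeff (t + 1 - i) * (lam i ^ 2 * μ i ^ 2) := by
  rw [Finset.sum_congr rfl fun i hi => biasCoeff_mul_eq_ite t _ (Finset.mem_Icc.mp hi).1,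
    Finset.sum_add_distrib, Finset.sum_ite_eq', ← Finset.sum_filter, weakBiasSq]
  have hfilter : (Icc 1 D).filter (fun i => ⌊t⌋₊ + 2 ≤ i) = Icc (⌊t⌋₊ + 2) D := by
    ext i; simp only [Finset.mem_filter, Finset.mem_Icc]; omega
  rw [hfilter]
  congr 1
  split_ifs with h
  · ring
  · rw [hμ0 _ (by rw [Finset.mem_Icc] at h; omega)]
    ring

theorem continuous_weakBiasSq (hμ0 : ∀ i, D < i → μ i = 0) :
    Continuous (weakBiasSq D lam μ) := by
  simp_rw [funext (weakBiasSq_eq_sum hμ0)]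
  exact continuous_finsetSum _ fun i _ =>
    (continuous_biasCoeff.comp (by fun_prop)).mul continuous_const

theorem antitone_weakBiasSq (hμ0 : ∀ i, D < i → μ i = 0) :
    Antitone (weakBiasSq D lam μ) := by
  intro s t hst
  rw [weakBiasSq_eq_sum hμ0, weakBiasSq_eq_sum hμ0]
  exact Finset.sum_le_sum fun i _ =>
    mul_le_mul_of_nonneg_right (antitone_biasCoeff (by linarith)) (by positivity)

theorem weakBiasSq_eq_zero_of_le (hμ0 : ∀ i, D < i → μ i = 0) {t : ℝ} (ht : D ≤ t) :
    weakBiasSq D lam μ t = 0 := by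
  rw [weakBiasSq_eq_sum hμ0]
  refine Finset.sum_eq_zero fun i hi => ?_
  have hiD : (i : ℝ) ≤ D := by exact_mod_cast (Finset.mem_Icc.mp hi).2
  rw [biasCoeff_of_one_le (by linarith), zero_mul]

section Crossing

variable {f g : ℝ → ℝ} {a : ℝ}

theorem csInf_setOf_le_mem (hf : Continuous f) (hg : Continuous g)
    (hne : {t | a ≤ t ∧ f t ≤ g t}.Nonempty) :
    sInf {t | a ≤ t ∧ f t ≤ g t} ∈ {t | a ≤ t ∧ f t ≤ g t} :=
  IsClosed.csInf_mem (isClosed_Ici.inter (isClosed_le hf hg)) hne ⟨a, fun _ ht => ht.1⟩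

theorem le_at_csInf_setOf_le (hf : Continuous f) (hg : Continuous g)
    (ha : a < sInf {t | a ≤ t ∧ f t ≤ g t}) :
    g (sInf {t | a ≤ t ∧ f t ≤ g t}) ≤ f (sInf {t | a ≤ t ∧ f t ≤ g t}) := by
  set s := sInf {t | a ≤ t ∧ f t ≤ g t}
  have hbelow : Set.Ico a s ⊆ {t | g t ≤ f t} := fun t ht => by
    have hnot := notMem_of_lt_csInf ht.2 ⟨a, fun _ hu => hu.1⟩
    simp only [Set.mem_ofPred_eq, not_and, not_le] at hnot
    exact (hnot ht.1).le
  have hclosure := (isClosed_le hg hf).closure_subset_iff.mpr hbelow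
  rw [closure_Ico ha.ne] at hclosure
  exact hclosure ⟨ha.le, le_rfl⟩

end Crossing

theorem bias_variance_gaps_le {B V : ℝ → ℝ} (hB : Antitone B) (hV : Monotone V)
    {m0 c κ tstar tw : ℝ} (hts : m0 ≤ tstar) (htw : m0 ≤ tw ∧ B tw ≤ V tw)
    (htw_left : m0 < tw → V tw ≤ B tw)
    (hstar : κ = c + B tstar - V tstar ∨ (tstar = m0 ∧ c + B tstar - V tstar ≤ κ)) :
    max (B tstar - B tw) 0 ≤ max (κ - c) 0 ∧ max (V tstar - V tw) 0 ≤ max (c - κ) 0 := by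
  rcases lt_or_ge tstar tw with hlt | hge
  · have hVtw := htw_left (hts.trans_lt hlt)
    have hVle := hV hlt.le
    have hstar_le : c + B tstar - V tstar ≤ κ := by
      rcases hstar with h | ⟨_, h⟩ <;> linarith
    exact ⟨max_le_max_right 0 (by linarith),
      max_le (by linarith [le_max_right (c - κ) 0]) (le_max_right _ _)⟩
  · have hBle := hB hge
    refine ⟨max_le (by linarith [le_max_right (κ - c) 0]) (le_max_right _ _), ?_⟩
    rcases hstar with h | ⟨h, _⟩
    · exact max_le_max_right 0 (by linarith [htw.2])
    · obtain rfl : tstar = tw := le_antisymm (h ▸ htw.1) hge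
      simp

theorem oracle_proxy_vs_weak_balanced_oracle_general
    (D m0 : ℕ) (lam μ : ℕ → ℝ) (δ κ : ℝ)
    (hμ0 : ∀ i, D < i → μ i = 0)
    (tstar tw : ℝ)
    (hts1 : (m0 : ℝ) ≤ tstar)
    (hstar : κ = D * δ ^ 2 + weakBiasSq D lam μ tstar - tstar * δ ^ 2
      ∨ (tstar = m0 ∧ D * δ ^ 2 + weakBiasSq D lam μ tstar - tstar * δ ^ 2 ≤ κ))
    (htw : tw = sInf {t : ℝ | (m0 : ℝ) ≤ t ∧ weakBiasSq D lam μ t ≤ t * δ ^ 2}) :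
    max (weakBiasSq D lam μ tstar - weakBiasSq D lam μ tw) 0 ≤ max (κ - D * δ ^ 2) 0
    ∧ max (tstar * δ ^ 2 - tw * δ ^ 2) 0 ≤ max (D * δ ^ 2 - κ) 0
    ∧ weakBiasSq D lam μ tstar + tstar * δ ^ 2
        ≤ weakBiasSq D lam μ tw + tw * δ ^ 2 + |κ - D * δ ^ 2| := by
  have hB := continuous_weakBiasSq (lam := lam) hμ0
  have hV : Continuous fun t : ℝ => t * δ ^ 2 := by fun_prop
  have hne : {t : ℝ | (m0 : ℝ) ≤ t ∧ weakBiasSq D lam μ t ≤ t * δ ^ 2}.Nonempty :=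
    ⟨max m0 D, le_max_left _ _, by
      rw [weakBiasSq_eq_zero_of_le hμ0 (le_max_right _ _)]; positivity⟩
  have htw_mem := csInf_setOf_le_mem hB hV hne
  have htw_left := le_at_csInf_setOf_le hB hV (a := m0)
  rw [← htw] at htw_mem htw_left
  obtain ⟨hbias, hvar⟩ := bias_variance_gaps_le (antitone_weakBiasSq hμ0)
    (fun _ _ h => mul_le_mul_of_nonneg_right h (sq_nonneg δ)) hts1 htw_mem htw_left hstar
  refine ⟨hbias, hvar, ?_⟩
  have habs := max_zero_add_max_neg_zero_eq_abs_self (κ - D * δ ^ 2)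
  rw [neg_sub] at habs
  linarith [le_max_left (weakBiasSq D lam μ tstar - weakBiasSq D lam μ tw) 0,
    le_max_left (tstar * δ ^ 2 - tw * δ ^ 2) 0]

/-- comparison of the oracle-proxy index `t*` with the weakly
balanced oracle `t_w`:
`(B²_{t*,λ} − B²_{t_w,λ})_+ ≤ (κ − Dδ²)_+`, `(V_{t*,λ} − V_{t_w,λ})_+ ≤ (Dδ² − κ)_+`,
and hence `E‖μ̂^(t*) − μ‖²_λ ≤ E‖μ̂^(t_w) − μ‖²_λ + |κ − Dδ²|`
(using `E‖μ̂^(t) − μ‖²_λ = B²_{t,λ}(μ) + tδ²`). -/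
theorem oracle_proxy_vs_weak_balanced_oracle
    (D m0 : ℕ) (hm0D : m0 ≤ D) (lam μ : ℕ → ℝ) (δ κ : ℝ) (hδ : 0 < δ) (hκ : 0 < κ)
    (hμ0 : ∀ i, D < i → μ i = 0)
    (tstar tw : ℝ)
    (hts1 : (m0 : ℝ) ≤ tstar) (hts2 : tstar ≤ D)
    (hstar : κ = D * δ ^ 2 + weakBiasSq D lam μ tstar - tstar * δ ^ 2
      ∨ (tstar = m0 ∧ D * δ ^ 2 + weakBiasSq D lam μ tstar - tstar * δ ^ 2 ≤ κ))
    (htw : tw = sInf {t : ℝ | (m0 : ℝ) ≤ t ∧ weakBiasSq D lam μ t ≤ t * δ ^ 2})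
    (htw2 : tw ≤ D) :
    max (weakBiasSq D lam μ tstar - weakBiasSq D lam μ tw) 0 ≤ max (κ - D * δ ^ 2) 0
    ∧ max (tstar * δ ^ 2 - tw * δ ^ 2) 0 ≤ max (D * δ ^ 2 - κ) 0
    ∧ weakBiasSq D lam μ tstar + tstar * δ ^ 2
        ≤ weakBiasSq D lam μ tw + tw * δ ^ 2 + |κ - D * δ ^ 2| :=
  oracle_proxy_vs_weak_balanced_oracle_general D m0 lam μ δ κ hμ0 tstar tw hts1 hstar htw
end

section
/- With t* the oracle-proxy index and t_w, t_s the weakly and strongly balanced oracle indices, it always holds that t* − (D − κδ^{-2})_+ ≤ t_w ≤ t_s. -/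
open Real Finset

/-- Interpolated strong (squared) bias `B_t²(μ)`. -/
noncomputable def strongBiasSq (D : ℕ) (μ : ℕ → ℝ) (t : ℝ) : ℝ :=
  (1 - Real.sqrt (t - ⌊t⌋₊)) ^ 2 * (μ (⌊t⌋₊ + 1)) ^ 2
    + ∑ i ∈ Finset.Icc (⌊t⌋₊ + 2) D, (μ i) ^ 2

/-- Interpolated strong variance `V_t`. -/
noncomputable def strongVar (lam : ℕ → ℝ) (δ t : ℝ) : ℝ :=
  (t - ⌊t⌋₊) * δ ^ 2 * ((lam (⌊t⌋₊ + 1))⁻¹) ^ 2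
    + δ ^ 2 * ∑ i ∈ Finset.Icc 1 ⌊t⌋₊, ((lam i)⁻¹) ^ 2

/-!
Both sets defining `t_w` and `t_s` contain `D`. Since `λ` is non-increasing, at every `t`
the weak bias is at most `λ_{⌊t⌋+1}²` times the strong bias while `λ_{⌊t⌋+1}²` times the strong
variance is at most the weak variance `t δ²`; so strong balance implies weak balance and
`t_w ≤ t_s`. For the lower bound, a weakly balanced `t < t*` gives
`B²_{t*,λ} ≤ B²_{t,λ} ≤ t δ²` because the weak bias is antitone, and the defining equation
of `t*` turns this into `t* - (D - κ/δ²) ≤ t`.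
-/

lemma sqrt_sub_floor_le_one (t : ℝ) : √(t - ⌊t⌋₊) ≤ 1 :=
  Real.sqrt_le_one.2 (by linarith [Nat.lt_floor_add_one t])

lemma one_sub_sqrt_sub_floor_sq_le_one (t : ℝ) : (1 - √(t - ⌊t⌋₊)) ^ 2 ≤ 1 := by
  have := sqrt_sub_floor_le_one t
  nlinarith [Real.sqrt_nonneg (t - ⌊t⌋₊)]

section WeakBias

variable {D : ℕ} {lam μ : ℕ → ℝ}

lemma sum_Icc_floor_add_two_le_weakBiasSq (t : ℝ) :
    ∑ i ∈ Icc (⌊t⌋₊ + 2) D, lam i ^ 2 * μ i ^ 2 ≤ weakBiasSq D lam μ t := by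
  unfold weakBiasSq
  linarith [mul_nonneg (mul_nonneg (sq_nonneg (1 - √(t - ⌊t⌋₊))) (sq_nonneg (lam (⌊t⌋₊ + 1))))
    (sq_nonneg (μ (⌊t⌋₊ + 1)))]

lemma weakBiasSq_le_sum_Icc_floor_add_one (hμ : ∀ i, D < i → μ i = 0) (t : ℝ) :
    weakBiasSq D lam μ t ≤ ∑ i ∈ Icc (⌊t⌋₊ + 1) D, lam i ^ 2 * μ i ^ 2 := by
  unfold weakBiasSq
  set k := ⌊t⌋₊
  by_cases hkD : k + 1 ≤ D
  · rw [Icc_eq_cons_Ioc hkD, sum_cons, ← Icc_add_one_left_eq_Ioc]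
    refine add_le_add ?_ le_rfl
    nlinarith [one_sub_sqrt_sub_floor_sq_le_one t,
      mul_nonneg (sq_nonneg (lam (k + 1))) (sq_nonneg (μ (k + 1)))]
  · rw [hμ (k + 1) (by omega), Icc_eq_empty (by omega), Icc_eq_empty (by omega)]
    simp

/-- Within one unit interval only the interpolation weight moves; across an integer the
leading term of the later index is dominated by a full term of the earlier tail. -/
lemma weakBiasSq_antitone (hμ : ∀ i, D < i → μ i = 0) : Antitone (weakBiasSq D lam μ) := by
  intro s t hst
  rcases (Nat.floor_le_floor hst).eq_or_lt with hfloor | hfloor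
  · have hsqrt : √(s - ⌊s⌋₊) ≤ √(t - ⌊t⌋₊) := Real.sqrt_le_sqrt (by rw [hfloor]; linarith)
    have hweight : (1 - √(t - ⌊t⌋₊)) ^ 2 ≤ (1 - √(s - ⌊s⌋₊)) ^ 2 :=
      pow_le_pow_left₀ (by linarith [sqrt_sub_floor_le_one t]) (by linarith) 2
    unfold weakBiasSq
    rw [← hfloor] at hweight ⊢
    gcongr
  · calc weakBiasSq D lam μ t
        ≤ ∑ i ∈ Icc (⌊t⌋₊ + 1) D, lam i ^ 2 * μ i ^ 2 :=
          weakBiasSq_le_sum_Icc_floor_add_one hμ t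
      _ ≤ ∑ i ∈ Icc (⌊s⌋₊ + 2) D, lam i ^ 2 * μ i ^ 2 :=
          sum_le_sum_of_subset_of_nonneg (Icc_subset_Icc_left (by omega))
            fun _ _ _ => by positivity
      _ ≤ weakBiasSq D lam μ s := sum_Icc_floor_add_two_le_weakBiasSq s

lemma weakBiasSq_natCast_self (hμ : ∀ i, D < i → μ i = 0) : weakBiasSq D lam μ D = 0 := by
  simp [weakBiasSq, hμ (D + 1) (by omega)]

end WeakBias

section StrongToWeak

variable {D : ℕ} {lam μ : ℕ → ℝ} {δ t : ℝ}
  (hpos : ∀ i, 1 ≤ i → 0 < lam i) (hanti : ∀ i j, 1 ≤ i → i ≤ j → lam j ≤ lam i)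
include hpos hanti

lemma weakBiasSq_le_mul_strongBiasSq :
    weakBiasSq D lam μ t ≤ lam (⌊t⌋₊ + 1) ^ 2 * strongBiasSq D μ t := by
  unfold weakBiasSq strongBiasSq
  rw [mul_add, mul_sum]
  refine add_le_add (le_of_eq (by ring)) (sum_le_sum fun i hi => ?_)
  have hi : ⌊t⌋₊ + 2 ≤ i := (mem_Icc.1 hi).1
  gcongr
  exacts [(hpos i (by omega)).le, hanti _ _ (by omega) (by omega)]

/-- Each of the first `⌊t⌋` inverse squares `λ_i⁻²` is at most `λ_{⌊t⌋+1}⁻²`. -/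
lemma mul_strongVar_le : lam (⌊t⌋₊ + 1) ^ 2 * strongVar lam δ t ≤ t * δ ^ 2 := by
  set k := ⌊t⌋₊
  have hk : 0 < lam (k + 1) := hpos (k + 1) (by omega)
  have hsum : ∑ i ∈ Icc 1 k, (lam i)⁻¹ ^ 2 ≤ k * (lam (k + 1))⁻¹ ^ 2 := by
    simpa using sum_le_card_nsmul (Icc 1 k) (fun i => (lam i)⁻¹ ^ 2) ((lam (k + 1))⁻¹ ^ 2)
      fun i hi => pow_le_pow_left₀ (inv_nonneg.2 (hpos i (mem_Icc.1 hi).1).le)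
        (inv_anti₀ hk (hanti i (k + 1) (mem_Icc.1 hi).1 (by grind))) 2
  calc lam (k + 1) ^ 2 * strongVar lam δ t
      ≤ lam (k + 1) ^ 2 * (t * δ ^ 2 * (lam (k + 1))⁻¹ ^ 2) := by
        unfold strongVar
        gcongr
        nlinarith [mul_le_mul_of_nonneg_left hsum (sq_nonneg δ)]
    _ = t * δ ^ 2 := by field_simp

lemma weakBiasSq_le_of_strongBiasSq_le (h : strongBiasSq D μ t ≤ strongVar lam δ t) :
    weakBiasSq D lam μ t ≤ t * δ ^ 2 :=
  calc weakBiasSq D lam μ t ≤ lam (⌊t⌋₊ + 1) ^ 2 * strongBiasSq D μ t :=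
        weakBiasSq_le_mul_strongBiasSq hpos hanti
    _ ≤ lam (⌊t⌋₊ + 1) ^ 2 * strongVar lam δ t := by gcongr
    _ ≤ t * δ ^ 2 := mul_strongVar_le hpos hanti

end StrongToWeak

lemma strongBiasSq_natCast_self {D : ℕ} {μ : ℕ → ℝ} (hμ : ∀ i, D < i → μ i = 0) :
    strongBiasSq D μ D = 0 := by
  simp [strongBiasSq, hμ (D + 1) (by omega)]

lemma strongVar_nonneg (lam : ℕ → ℝ) (δ : ℝ) {t : ℝ} (ht : 0 ≤ t) : 0 ≤ strongVar lam δ t := by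
  have : 0 ≤ t - ⌊t⌋₊ := sub_nonneg.2 (Nat.floor_le ht)
  unfold strongVar
  positivity

theorem oracle_index_ordering_general
    (D m0 : ℕ) (hm0D : m0 ≤ D) (lam μ : ℕ → ℝ) (δ κ : ℝ) (hδ : 0 < δ)
    (hμ0 : ∀ i, D < i → μ i = 0)
    (hlam_pos : ∀ i, 1 ≤ i → 0 < lam i)
    (hlam_mono : ∀ i j, 1 ≤ i → i ≤ j → lam j ≤ lam i)
    (tstar tw ts : ℝ)
    (hstar : κ = D * δ ^ 2 + weakBiasSq D lam μ tstar - tstar * δ ^ 2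
      ∨ (tstar = m0 ∧ D * δ ^ 2 + weakBiasSq D lam μ tstar - tstar * δ ^ 2 ≤ κ))
    (htw : tw = sInf {t : ℝ | (m0 : ℝ) ≤ t ∧ weakBiasSq D lam μ t ≤ t * δ ^ 2})
    (hts : ts = sInf {t : ℝ | (m0 : ℝ) ≤ t ∧ strongBiasSq D μ t ≤ strongVar lam δ t}) :
    tstar - max ((D : ℝ) - κ / δ ^ 2) 0 ≤ tw ∧ tw ≤ ts := by
  have hm0D' : (m0 : ℝ) ≤ D := by exact_mod_cast hm0D
  have hD_weak : weakBiasSq D lam μ D ≤ D * δ ^ 2 := by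
    rw [weakBiasSq_natCast_self hμ0]; positivity
  subst htw hts
  constructor
  · refine le_csInf ⟨D, hm0D', hD_weak⟩ fun t ⟨hm0t, hweak⟩ => ?_
    rcases le_or_gt tstar t with htt | htt
    · linarith [le_max_right ((D : ℝ) - κ / δ ^ 2) 0]
    rcases hstar with hκ | ⟨rfl, -⟩
    · have hB : weakBiasSq D lam μ tstar ≤ t * δ ^ 2 :=
        (weakBiasSq_antitone hμ0 htt.le).trans hweak
      have hκδ : κ / δ ^ 2 = D - tstar + weakBiasSq D lam μ tstar / δ ^ 2 := by
        rw [hκ]; field_simp; ring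
      linarith [le_max_left ((D : ℝ) - κ / δ ^ 2) 0, (div_le_iff₀ (by positivity)).2 hB]
    · linarith
  · exact csInf_le_csInf ⟨m0, fun _ h => h.1⟩
      ⟨D, hm0D', (strongBiasSq_natCast_self hμ0).trans_le (strongVar_nonneg lam δ D.cast_nonneg)⟩
      fun t ⟨hm0t, hstrong⟩ => ⟨hm0t, weakBiasSq_le_of_strongBiasSq_le hlam_pos hlam_mono hstrong⟩

/-- ordering of the oracle indices:
`t* − (D − κδ^{-2})_+ ≤ t_w ≤ t_s`. -/
theorem oracle_index_ordering
    (D m0 : ℕ) (hm0D : m0 ≤ D) (lam μ : ℕ → ℝ) (δ κ : ℝ) (hδ : 0 < δ) (hκ : 0 < κ)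
    (hμ0 : ∀ i, D < i → μ i = 0)
    (hlam_pos : ∀ i, 1 ≤ i → 0 < lam i)
    (hlam_mono : ∀ i j, 1 ≤ i → i ≤ j → lam j ≤ lam i)
    (tstar tw ts : ℝ)
    (hts1 : (m0 : ℝ) ≤ tstar) (hts2 : tstar ≤ D)
    (hstar : κ = D * δ ^ 2 + weakBiasSq D lam μ tstar - tstar * δ ^ 2
      ∨ (tstar = m0 ∧ D * δ ^ 2 + weakBiasSq D lam μ tstar - tstar * δ ^ 2 ≤ κ))
    (htw : tw = sInf {t : ℝ | (m0 : ℝ) ≤ t ∧ weakBiasSq D lam μ t ≤ t * δ ^ 2})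
    (hts : ts = sInf {t : ℝ | (m0 : ℝ) ≤ t ∧ strongBiasSq D μ t ≤ strongVar lam δ t}) :
    tstar - max ((D : ℝ) - κ / δ ^ 2) 0 ≤ tw ∧ tw ≤ ts :=
  oracle_index_ordering_general D m0 hm0D lam μ δ κ hδ hμ0 hlam_pos hlam_mono tstar tw ts hstar htw
    hts
end

section
/- For m_0 ≤ m < t*, the probability of early stopping is bounded by P(R_m² ≤ κ) ≤ exp( −(E[R_m²]−κ)² / (16 δ⁴ (D−m)) ) + exp( −(E[R_m²]−κ)² / (32 δ² B²_{m,λ}(μ)) ). -/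
open MeasureTheory ProbabilityTheory Real Finset

/-- Residual at integer truncation level `m`: `R_m² = Σ_{i=m+1}^D Y_i²`. -/
noncomputable def residSq {Ω : Type*} (D : ℕ) (Y : ℕ → Ω → ℝ) (m : ℕ) (ω : Ω) : ℝ :=
  ∑ i ∈ Finset.Icc (m + 1) D, (Y i ω) ^ 2

/-- Interpolated residual `R_t²`. -/
noncomputable def residSqT {Ω : Type*} (D : ℕ) (Y : ℕ → Ω → ℝ) (t : ℝ) (ω : Ω) : ℝ :=
  (1 - Real.sqrt (t - ⌊t⌋₊)) ^ 2 * (Y (⌊t⌋₊ + 1) ω) ^ 2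
    + ∑ i ∈ Finset.Icc (⌊t⌋₊ + 2) D, (Y i ω) ^ 2

open scoped NNReal

/-! Write `Y_i = c_i + δ ε_i` with `c_i = λ_i μ_i`. Then
`E[R_m²] - R_m² = δ² ∑ (1 - ε_i²) + 2δ ∑ (-c_i ε_i)`, and `E[R_m²] > κ` because `m` lies below the
infimum `t*` (at integer `t` the interpolated residual is `R_m²`). So if `R_m² ≤ κ`, one of the two
sums exceeds half of `a = E[R_m²] - κ`. Both tails are bounded by the Chernoff method with the
one-sided bound `mgf X t ≤ exp (c t² / 2)` for `t ≥ 0`: for `-c_i ε_i` it is the Gaussian mgf, and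
for `1 - ε_i²` it reads `e^t / √(1 + 2t) ≤ e^{t²}`, i.e. `log (1 + u) ≥ u - u² / 2`. -/

lemma integral_sq_gaussianReal (m : ℝ) (v : ℝ≥0) :
    ∫ x, x ^ 2 ∂gaussianReal m v = m ^ 2 + v := by
  have h := variance_eq_sub (memLp_id_gaussianReal (μ := m) (v := v) 2)
  rw [variance_id_gaussianReal] at h
  simp only [Pi.pow_apply, id] at h
  rw [integral_id_gaussianReal] at h
  linarith

lemma integral_exp_neg_mul_sq_gaussianReal {s : ℝ} (hs : 0 ≤ s) :
    ∫ x, exp (-s * x ^ 2) ∂gaussianReal 0 1 = (√(1 + 2 * s))⁻¹ := by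
  have hpdf : ∀ x, gaussianPDFReal 0 1 x • exp (-s * x ^ 2)
      = (√(2 * π))⁻¹ * exp (-(1 / 2 + s) * x ^ 2) := fun x => by
    rw [gaussianPDFReal, smul_eq_mul, mul_assoc, ← exp_add]
    simp only [NNReal.coe_one, mul_one, sub_zero]
    ring_nf
  rw [integral_gaussianReal_eq_integral_smul one_ne_zero]
  simp_rw [hpdf]
  have hvar : π / (1 / 2 + s) = 2 * π / (1 + 2 * s) := by field_simp
  rw [integral_const_mul, integral_gaussian, hvar, sqrt_div (by positivity), div_eq_mul_inv,
    ← mul_assoc, inv_mul_cancel₀ (by positivity), one_mul]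

lemma exp_sub_half_sq_le_one_add {u : ℝ} (hu : 0 ≤ u) : exp (u - u ^ 2 / 2) ≤ 1 + u := by
  set g : ℝ → ℝ := fun v => log (1 + v) - v + v ^ 2 / 2
  have hg : ∀ v ∈ Set.Ici (0 : ℝ), HasDerivAt g (v ^ 2 / (1 + v)) v := by
    intro v hv
    have hv1 : 1 + v ≠ 0 := by simp only [Set.mem_Ici] at hv; positivity
    have h := ((((hasDerivAt_id v).const_add 1).log hv1).sub (hasDerivAt_id v)).add
      ((hasDerivAt_pow 2 v).div_const 2)
    exact h.congr_deriv (by simp only [id]; field_simp; ring)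
  have hmono : MonotoneOn g (Set.Ici 0) :=
    monotoneOn_of_hasDerivWithinAt_nonneg (convex_Ici 0)
      (fun v hv => (hg v hv).continuousAt.continuousWithinAt)
      (fun v hv => (hg v (interior_subset hv)).hasDerivWithinAt)
      (fun v hv => by
        rw [interior_Ici] at hv
        exact div_nonneg (sq_nonneg v) (by simp only [Set.mem_Ioi] at hv; linarith))
  have h := hmono Set.self_mem_Ici hu hu
  simp only [g, add_zero, log_one, sub_zero, ne_eq, OfNat.ofNat_ne_zero, not_false_eq_true,
    zero_pow, zero_div] at h
  calc exp (u - u ^ 2 / 2) ≤ exp (log (1 + u)) := exp_le_exp.mpr (by linarith)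
    _ = 1 + u := exp_log (by linarith)

lemma exp_mul_inv_sqrt_le_exp_sq {s : ℝ} (hs : 0 ≤ s) : exp s * (√(1 + 2 * s))⁻¹ ≤ exp (s ^ 2) := by
  have h : exp (s - s ^ 2) ≤ √(1 + 2 * s) := by
    rw [le_sqrt (exp_pos _).le (by linarith), ← exp_nat_mul]
    convert exp_sub_half_sq_le_one_add (u := 2 * s) (by linarith) using 2
    push_cast; ring
  calc exp s * (√(1 + 2 * s))⁻¹ ≤ exp s * (exp (s - s ^ 2))⁻¹ := by gcongr
    _ = exp (s ^ 2) := by rw [← exp_neg, ← exp_add]; ring_nf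

lemma measureReal_sum_ge_le_of_mgf_le {Ω ι : Type*} [MeasurableSpace Ω] {μ : Measure Ω}
    [IsProbabilityMeasure μ] {X : ι → Ω → ℝ} (h_indep : iIndepFun X μ)
    (h_meas : ∀ i, AEMeasurable (X i) μ) {s : Finset ι} {c : ι → ℝ}
    (h_int : ∀ i ∈ s, ∀ t, 0 ≤ t → Integrable (fun ω => exp (t * X i ω)) μ)
    (h_mgf : ∀ i ∈ s, ∀ t, 0 ≤ t → mgf (X i) μ t ≤ exp (c i * t ^ 2 / 2))
    {ε : ℝ} (hε : 0 ≤ ε) :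
    μ.real {ω | ε ≤ ∑ i ∈ s, X i ω} ≤ exp (-ε ^ 2 / (2 * ∑ i ∈ s, c i)) := by
  set C := ∑ i ∈ s, c i
  rcases le_or_gt C 0 with hC | hC
  · refine measureReal_le_one.trans (one_le_exp ?_)
    exact div_nonneg_of_nonpos (neg_nonpos.mpr (sq_nonneg ε)) (by linarith)
  -- the Chernoff bound is optimized at `t = ε / C`
  set t := ε / C
  have ht : 0 ≤ t := div_nonneg hε hC.le
  have h_mgf_sum : mgf (∑ i ∈ s, X i) μ t = ∏ i ∈ s, mgf (X i) μ t := h_indep.mgf_sum₀ h_meas s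
  have h_int_sum : Integrable (fun ω => exp (t * (∑ i ∈ s, X i) ω)) μ := by
    rw [← mgf_pos_iff, h_mgf_sum]
    exact prod_pos fun i hi => mgf_pos (h_int i hi t ht)
  calc μ.real {ω | ε ≤ ∑ i ∈ s, X i ω} = μ.real {ω | ε ≤ (∑ i ∈ s, X i) ω} := by
        simp only [Finset.sum_apply]
    _ ≤ exp (-t * ε) * mgf (∑ i ∈ s, X i) μ t := measure_ge_le_exp_mul_mgf ε ht h_int_sum
    _ ≤ exp (-t * ε) * ∏ i ∈ s, exp (c i * t ^ 2 / 2) := by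
        rw [h_mgf_sum]
        exact mul_le_mul_of_nonneg_left
          (prod_le_prod (fun _ _ => mgf_nonneg) fun i hi => h_mgf i hi t ht) (exp_pos _).le
    _ = exp (-ε ^ 2 / (2 * C)) := by
        rw [← exp_sum, ← exp_add, ← Finset.sum_div, ← Finset.sum_mul]
        congr 1
        simp only [t, C]
        field_simp
        ring

section StandardGaussian

variable {Ω ι : Type*} [MeasurableSpace Ω] {P : Measure Ω}

lemma mgf_one_sub_sq_of_hasLaw_gaussianReal {X : Ω → ℝ} (hX : HasLaw X (gaussianReal 0 1) P)
    {t : ℝ} (ht : 0 ≤ t) : mgf (fun ω => 1 - X ω ^ 2) P t = exp t * (√(1 + 2 * t))⁻¹ := by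
  have h : (fun ω => exp (t * (1 - X ω ^ 2))) = fun ω => exp t * exp (-t * X ω ^ 2) := by
    ext ω; rw [← exp_add]; ring_nf
  rw [mgf, h, integral_const_mul, ← integral_exp_neg_mul_sq_gaussianReal ht]
  exact congrArg _ (hX.integral_comp (f := fun x => exp (-t * x ^ 2)) (by fun_prop))

lemma integral_sq_of_hasLaw_gaussianReal {X : Ω → ℝ} {m : ℝ} {v : ℝ≥0}
    (hX : HasLaw X (gaussianReal m v) P) : ∫ ω, X ω ^ 2 ∂P = m ^ 2 + v :=
  (hX.integral_comp (f := fun x => x ^ 2) (by fun_prop)).trans (integral_sq_gaussianReal m v)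

lemma integrable_sq_of_hasLaw_gaussianReal {X : Ω → ℝ} {m : ℝ} {v : ℝ≥0}
    (hX : HasLaw X (gaussianReal m v) P) : Integrable (fun ω => X ω ^ 2) P := by
  have h : Integrable (fun x : ℝ => x ^ 2) (gaussianReal m v) :=
    (memLp_id_gaussianReal 2).integrable_sq
  rw [← hX.map_eq] at h
  exact (integrable_map_measure (by fun_prop) hX.aemeasurable).mp h

variable [IsProbabilityMeasure P] {ε : ι → Ω → ℝ}

lemma measureReal_sum_one_sub_sq_ge_le (h_indep : iIndepFun ε P)
    (hε : ∀ i, HasLaw (ε i) (gaussianReal 0 1) P) (s : Finset ι) {x : ℝ} (hx : 0 ≤ x) :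
    P.real {ω | x ≤ ∑ i ∈ s, (1 - ε i ω ^ 2)} ≤ exp (-x ^ 2 / (4 * #s)) := by
  have h_mgf : ∀ i, ∀ t, 0 ≤ t → mgf (fun ω => 1 - ε i ω ^ 2) P t = exp t * (√(1 + 2 * t))⁻¹ :=
    fun i _ ht => mgf_one_sub_sq_of_hasLaw_gaussianReal (hε i) ht
  have h := measureReal_sum_ge_le_of_mgf_le (X := fun i ω => 1 - ε i ω ^ 2) (c := fun _ => 2)
    (h_indep.comp (fun _ x => 1 - x ^ 2) fun _ => by fun_prop)
    (fun i => by have := (hε i).aemeasurable; fun_prop)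
    (fun i _ t ht => by rw [← mgf_pos_iff, h_mgf i t ht]; positivity)
    (fun i _ t ht => by
      rw [h_mgf i t ht]
      exact (exp_mul_inv_sqrt_le_exp_sq ht).trans_eq (by ring_nf)) (s := s) hx
  rw [sum_const, nsmul_eq_mul] at h
  exact h.trans_eq (by ring_nf)

lemma measureReal_sum_mul_ge_le (h_indep : iIndepFun ε P)
    (hε : ∀ i, HasLaw (ε i) (gaussianReal 0 1) P) (s : Finset ι) (c : ι → ℝ) {x : ℝ} (hx : 0 ≤ x) :
    P.real {ω | x ≤ ∑ i ∈ s, c i * ε i ω} ≤ exp (-x ^ 2 / (2 * ∑ i ∈ s, c i ^ 2)) := by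
  have h_mgf : ∀ i t, mgf (fun ω => c i * ε i ω) P t = exp (c i ^ 2 * t ^ 2 / 2) := by
    intro i t
    rw [mgf_const_mul, mgf_gaussianReal (hε i).map_eq, NNReal.coe_one]
    ring_nf
  refine measureReal_sum_ge_le_of_mgf_le (X := fun i ω => c i * ε i ω)
    (h_indep.comp (fun i x => c i * x) fun _ => by fun_prop)
    (fun i => by have := (hε i).aemeasurable; fun_prop)
    (fun i _ t _ => by rw [← mgf_pos_iff, h_mgf]; positivity)
    (fun i _ t _ => (h_mgf i t).le) hx

end StandardGaussian

lemma residSqT_natCast {Ω : Type*} {D m : ℕ} (Y : ℕ → Ω → ℝ) (hmD : m < D) :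
    residSqT D Y m = residSq D Y m := by
  ext ω
  have hIcc : Icc (m + 1) D = insert (m + 1) (Icc (m + 2) D) := by
    ext j; simp only [mem_Icc, mem_insert]; omega
  simp [residSqT, residSq, hIcc]

lemma lt_integral_residSq_of_lt_sInf {Ω : Type*} [MeasurableSpace Ω] {P : Measure Ω}
    {D m0 m : ℕ} {Y : ℕ → Ω → ℝ} {δ κ : ℝ} (hm0m : m0 ≤ m) (hmD : m < D)
    (hm : (m : ℝ) < sInf {t : ℝ | (m0 : ℝ) ≤ t
        ∧ ∫ ω, residSqT D Y t ω ∂P ≤ κ - 2 * (√(t - ⌊t⌋₊) - (t - ⌊t⌋₊)) * δ ^ 2}) :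
    κ < ∫ ω, residSq D Y m ω ∂P := by
  by_contra! h
  refine hm.not_ge (csInf_le ⟨m0, fun t ht => ht.1⟩ ⟨by exact_mod_cast hm0m, ?_⟩)
  simpa [residSqT_natCast Y hmD] using h

section SequenceModel

variable {Ω : Type*} {D m : ℕ} {c : ℕ → ℝ} {δ : ℝ} {ε Y : ℕ → Ω → ℝ}

lemma integral_residSq [MeasurableSpace Ω] {P : Measure Ω} [IsProbabilityMeasure P]
    (hε : ∀ i, HasLaw (ε i) (gaussianReal 0 1) P)
    (hY : ∀ i ω, Y i ω = c i + δ * ε i ω) :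
    ∫ ω, residSq D Y m ω ∂P = ∑ i ∈ Icc (m + 1) D, (c i ^ 2 + δ ^ 2) := by
  have hYlaw : ∀ i, HasLaw (Y i) (gaussianReal (c i) ⟨δ ^ 2, sq_nonneg δ⟩) P := fun i => by
    have h := gaussianReal_const_add (gaussianReal_const_mul (hε i) δ) (c i)
    simp only [mul_zero, zero_add, mul_one, ← hY] at h
    exact h
  unfold residSq
  rw [integral_finsetSum _ fun i _ => integrable_sq_of_hasLaw_gaussianReal (hYlaw i)]
  exact sum_congr rfl fun i _ => integral_sq_of_hasLaw_gaussianReal (hYlaw i)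

lemma sum_sub_residSq_eq (hY : ∀ i ω, Y i ω = c i + δ * ε i ω) (ω : Ω) :
    ∑ i ∈ Icc (m + 1) D, (c i ^ 2 + δ ^ 2) - residSq D Y m ω
      = δ ^ 2 * ∑ i ∈ Icc (m + 1) D, (1 - ε i ω ^ 2)
        + 2 * δ * ∑ i ∈ Icc (m + 1) D, -c i * ε i ω := by
  simp only [residSq, hY, mul_sum, ← sum_sub_distrib, ← sum_add_distrib]
  exact sum_congr rfl fun i _ => by ring

lemma setOf_residSq_le_subset (hδ : 0 < δ) (hY : ∀ i ω, Y i ω = c i + δ * ε i ω) (κ : ℝ) :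
    {ω | residSq D Y m ω ≤ κ} ⊆
      {ω | (∑ i ∈ Icc (m + 1) D, (c i ^ 2 + δ ^ 2) - κ) / (2 * δ ^ 2)
          ≤ ∑ i ∈ Icc (m + 1) D, (1 - ε i ω ^ 2)} ∪
      {ω | (∑ i ∈ Icc (m + 1) D, (c i ^ 2 + δ ^ 2) - κ) / (4 * δ)
          ≤ ∑ i ∈ Icc (m + 1) D, -c i * ε i ω} := by
  intro ω hω
  by_contra! h
  simp only [Set.mem_union, Set.mem_ofPred_eq, not_or, not_le] at h hω
  rw [lt_div_iff₀ (by positivity), lt_div_iff₀ (by positivity)] at h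
  linarith [sum_sub_residSq_eq (D := D) (m := m) hY ω]

end SequenceModel

theorem early_stopping_probability_bound_general
    {Ω : Type*} [MeasurableSpace Ω] (P : Measure Ω) [IsProbabilityMeasure P]
    (D m0 : ℕ) (lam μ : ℕ → ℝ) (δ κ : ℝ) (hδ : 0 < δ)
    (ε : ℕ → Ω → ℝ) (hεmeas : ∀ i, Measurable (ε i))
    (hεindep : iIndepFun ε P)
    (hεgauss : ∀ i, Measure.map (ε i) P = gaussianReal 0 1)
    (Y : ℕ → Ω → ℝ) (hY : ∀ i ω, Y i ω = lam i * μ i + δ * ε i ω)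
    (tstar : ℝ)
    (htstar : tstar = sInf {t : ℝ | (m0 : ℝ) ≤ t
        ∧ ∫ ω, residSqT D Y t ω ∂P
            ≤ κ - 2 * (Real.sqrt (t - ⌊t⌋₊) - (t - ⌊t⌋₊)) * δ ^ 2})
    (hts2 : tstar ≤ D)
    (m : ℕ) (hm0m : m0 ≤ m) (hmt : (m : ℝ) < tstar) :
    (P {ω | residSq D Y m ω ≤ κ}).toReal
      ≤ Real.exp (-((∫ ω, residSq D Y m ω ∂P) - κ) ^ 2
            / (16 * δ ^ 4 * ((D : ℝ) - m)))
        + Real.exp (-((∫ ω, residSq D Y m ω ∂P) - κ) ^ 2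
            / (32 * δ ^ 2 * ∑ i ∈ Finset.Icc (m + 1) D, (lam i * μ i) ^ 2)) := by
  have hε : ∀ i, HasLaw (ε i) (gaussianReal 0 1) P := fun i => ⟨(hεmeas i).aemeasurable, hεgauss i⟩
  have hmD : m < D := by exact_mod_cast hmt.trans_le hts2
  have hκE := lt_integral_residSq_of_lt_sInf hm0m hmD (htstar ▸ hmt)
  rw [integral_residSq hε hY] at hκE ⊢
  set a := ∑ i ∈ Icc (m + 1) D, ((lam i * μ i) ^ 2 + δ ^ 2) - κ
  have ha : 0 ≤ a := by linarith
  have hcard : ((#(Icc (m + 1) D) : ℕ) : ℝ) = D - m := by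
    rw [Nat.card_Icc, Nat.add_sub_add_right, Nat.cast_sub hmD.le]
  calc (P {ω | residSq D Y m ω ≤ κ}).toReal
      ≤ P.real {ω | a / (2 * δ ^ 2) ≤ ∑ i ∈ Icc (m + 1) D, (1 - ε i ω ^ 2)}
        + P.real {ω | a / (4 * δ) ≤ ∑ i ∈ Icc (m + 1) D, -(lam i * μ i) * ε i ω} :=
      (measureReal_mono (setOf_residSq_le_subset hδ hY κ)).trans (measureReal_union_le _ _)
    _ ≤ exp (-(a / (2 * δ ^ 2)) ^ 2 / (4 * #(Icc (m + 1) D)))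
        + exp (-(a / (4 * δ)) ^ 2 / (2 * ∑ i ∈ Icc (m + 1) D, (-(lam i * μ i)) ^ 2)) :=
      add_le_add (measureReal_sum_one_sub_sq_ge_le hεindep hε _ (by positivity))
        (measureReal_sum_mul_ge_le hεindep hε _ _ (by positivity))
    _ = _ := by
      simp only [hcard, neg_sq]
      congr 2 <;> field_simp <;> ring

/-- exponential bound on the probability of early stopping:
for `m₀ ≤ m < t*`,
`P(R_m² ≤ κ) ≤ exp(−(E[R_m²]−κ)²/(16δ⁴(D−m))) + exp(−(E[R_m²]−κ)²/(32δ²B²_{m,λ}(μ)))`. -/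
theorem early_stopping_probability_bound
    {Ω : Type*} [MeasurableSpace Ω] (P : Measure Ω) [IsProbabilityMeasure P]
    (D m0 : ℕ) (lam μ : ℕ → ℝ) (δ κ : ℝ) (hδ : 0 < δ) (hκ : 0 < κ)
    (hμ0 : ∀ i, D < i → μ i = 0)
    (hlam_pos : ∀ i, 1 ≤ i → 0 < lam i)
    (ε : ℕ → Ω → ℝ) (hεmeas : ∀ i, Measurable (ε i))
    (hεindep : iIndepFun ε P)
    (hεgauss : ∀ i, Measure.map (ε i) P = gaussianReal 0 1)
    (Y : ℕ → Ω → ℝ) (hY : ∀ i ω, Y i ω = lam i * μ i + δ * ε i ω)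
    (tstar : ℝ)
    (htstar : tstar = sInf {t : ℝ | (m0 : ℝ) ≤ t
        ∧ ∫ ω, residSqT D Y t ω ∂P
            ≤ κ - 2 * (Real.sqrt (t - ⌊t⌋₊) - (t - ⌊t⌋₊)) * δ ^ 2})
    (hts1 : (m0 : ℝ) ≤ tstar) (hts2 : tstar ≤ D)
    (m : ℕ) (hm0m : m0 ≤ m) (hmt : (m : ℝ) < tstar) :
    (P {ω | residSq D Y m ω ≤ κ}).toReal
      ≤ Real.exp (-((∫ ω, residSq D Y m ω ∂P) - κ) ^ 2
            / (16 * δ ^ 4 * ((D : ℝ) - m)))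
        + Real.exp (-((∫ ω, residSq D Y m ω ∂P) - κ) ^ 2
            / (32 * δ ^ 2 * ∑ i ∈ Finset.Icc (m + 1) D, (lam i * μ i) ^ 2)) :=
  early_stopping_probability_bound_general P D m0 lam μ δ κ hδ ε hεmeas hεindep hεgauss Y hY tstar
    htstar hts2 m hm0m hmt
end
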